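/- arXiv:math/0603138 — 7 statements merged into one kernel-verified Lean document; each statement's English description precedes it below -/
import Mathlib

section
/- For every p with 1 < p < ∞, setting q = max{p,2}, there exists a constant C < ∞ depending only on p with the following property: for every integer r ≥ 1, writing J = 2^r, every measure space (X,μ), and all vectors x_0, x_1, …, x_J ∈ L^p(X,μ), one has Σ_{s=1}^{r−1} 2^{−qs} · min{ ‖2x_j − x_{j−2^s} − x_{j+2^s}‖_p^q : 2^s ≤ j ≤ J − 2^s } ≤ C · max{ ‖x_{j+1} − x_j‖_p^q : 0 ≤ j ≤ J−1 }. -/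
open MeasureTheory Set
open scoped ENNReal NNReal

namespace BP5

lemma two_le_add {a b : ℝ} (ha : 0 < a) (hb : 0 < b) (h : 1 ≤ a * b) : 2 ≤ a + b := by
  nlinarith [sq_nonneg (a - b), sq_nonneg (a + b - 2)]

/-- Step B: `2 + p(p-1)t² ≤ (1+t)^p + (1-t)^p` for `t ∈ [0,1]`, `1 < p ≤ 2`. -/
lemma stepB {p : ℝ} (hp1 : 1 < p) (hp2 : p ≤ 2) {t : ℝ} (ht0 : 0 ≤ t) (ht1 : t ≤ 1) :
    2 + p * (p - 1) * t ^ 2 ≤ (1 + t) ^ p + (1 - t) ^ p := by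
  set g1 : ℝ → ℝ := fun t => (1 + t) ^ p + (1 - t) ^ p - 2 - p * (p - 1) * t ^ 2 with hg1
  set g2 : ℝ → ℝ := fun t => p * (1 + t) ^ (p - 1) - p * (1 - t) ^ (p - 1) - 2 * p * (p - 1) * t
    with hg2
  have hc1 : Continuous fun s : ℝ => (1 + s) ^ p :=
    (continuous_const.add continuous_id).rpow_const (fun x => Or.inr (by linarith))
  have hc2 : Continuous fun s : ℝ => (1 - s) ^ p :=
    (continuous_const.sub continuous_id).rpow_const (fun x => Or.inr (by linarith))
  have hc3 : Continuous fun s : ℝ => (1 + s) ^ (p - 1) :=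
    (continuous_const.add continuous_id).rpow_const (fun x => Or.inr (by linarith))
  have hc4 : Continuous fun s : ℝ => (1 - s) ^ (p - 1) :=
    (continuous_const.sub continuous_id).rpow_const (fun x => Or.inr (by linarith))
  have hder2 : ∀ s ∈ Ioo (0:ℝ) 1, HasDerivAt g2
      (p * (p-1) * ((1 + s) ^ (p - 2) + (1 - s) ^ (p - 2)) - 2 * p * (p-1)) s := by
    intro s hs
    have h1 : HasDerivAt (fun s : ℝ => (1 + s) ^ (p - 1)) ((p-1) * (1+s)^(p-2)) s := by
      have := (Real.hasDerivAt_rpow_const (p := p - 1)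
        (Or.inl (by nlinarith [hs.1] : (1:ℝ) + s ≠ 0))).comp s
        ((hasDerivAt_id s).const_add 1)
      simpa [Function.comp_def] using this.congr_deriv (by ring_nf)
    have h2 : HasDerivAt (fun s : ℝ => (1 - s) ^ (p - 1)) (-((p-1) * (1-s)^(p-2))) s := by
      have := (Real.hasDerivAt_rpow_const (p := p - 1)
        (Or.inl (by nlinarith [hs.2] : (1:ℝ) - s ≠ 0))).comp s
        ((hasDerivAt_id s).neg.const_add 1)
      simpa [Function.comp_def] using this.congr_deriv (by ring_nf)
    have h3 : HasDerivAt (fun s : ℝ => 2 * p * (p - 1) * s) (2 * p * (p-1)) s := by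
      simpa using (hasDerivAt_id s).const_mul (2 * p * (p - 1))
    have := ((h1.const_mul p).sub (h2.const_mul p)).sub h3
    refine this.congr_deriv ?_
    ring
  have hder1 : ∀ s ∈ Ioo (0:ℝ) 1, HasDerivAt g1 (g2 s) s := by
    intro s hs
    have h1 : HasDerivAt (fun s : ℝ => (1 + s) ^ p) (p * (1+s)^(p-1)) s := by
      have := (Real.hasDerivAt_rpow_const (p := p)
        (Or.inl (by nlinarith [hs.1] : (1:ℝ) + s ≠ 0))).comp s
        ((hasDerivAt_id s).const_add 1)
      simpa [Function.comp_def] using this.congr_deriv (by ring_nf)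
    have h2 : HasDerivAt (fun s : ℝ => (1 - s) ^ p) (-(p * (1-s)^(p-1))) s := by
      have := (Real.hasDerivAt_rpow_const (p := p)
        (Or.inl (by nlinarith [hs.2] : (1:ℝ) - s ≠ 0))).comp s
        ((hasDerivAt_id s).neg.const_add 1)
      simpa [Function.comp_def] using this.congr_deriv (by ring_nf)
    have h3 : HasDerivAt (fun s : ℝ => 2 + p * (p - 1) * s ^ 2) (2 * (p * (p-1)) * s) s := by
      have := ((hasDerivAt_pow 2 s).const_mul (p * (p-1))).const_add 2
      simpa using this.congr_deriv (by ring)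
    have := (h1.add h2).sub h3
    have heq : (fun s : ℝ => (1 + s) ^ p + (1 - s) ^ p - (2 + p * (p-1) * s ^ 2)) = g1 := by
      funext u; simp only [hg1]; ring
    rw [show (((fun s : ℝ => (1 + s) ^ p) + fun s : ℝ => (1 - s) ^ p) - fun s : ℝ => 2 + p * (p - 1) * s ^ 2) = g1 from heq] at this
    refine this.congr_deriv ?_
    simp only [hg2]; ring
  -- g2 is nonneg on Ioo 0 1
  have hg2cont : Continuous g2 := ((continuous_const.mul hc3).sub (continuous_const.mul hc4)).sub
      ((continuous_const.mul continuous_id))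
  have hg2mono : MonotoneOn g2 (Icc 0 1) := by
    apply monotoneOn_of_deriv_nonneg (convex_Icc 0 1) hg2cont.continuousOn
    · intro s hs
      rw [interior_Icc] at hs
      exact ((hder2 s hs).differentiableAt).differentiableWithinAt
    · intro s hs
      rw [interior_Icc] at hs
      rw [(hder2 s hs).deriv]
      have hs1 : (0:ℝ) < 1 + s := by linarith [hs.1]
      have hs2 : (0:ℝ) < 1 - s := by linarith [hs.2]
      have ha : (0:ℝ) < (1 + s) ^ (p - 2) := Real.rpow_pos_of_pos hs1 _
      have hb : (0:ℝ) < (1 - s) ^ (p - 2) := Real.rpow_pos_of_pos hs2 _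
      have hprod : 1 ≤ (1 + s) ^ (p - 2) * (1 - s) ^ (p - 2) := by
        rw [← Real.mul_rpow (le_of_lt hs1) (le_of_lt hs2)]
        apply Real.one_le_rpow_of_pos_of_le_one_of_nonpos
        · nlinarith [hs.1, hs.2]
        · nlinarith [hs.1, hs.2]
        · linarith
      have h2le : 2 ≤ (1 + s) ^ (p - 2) + (1 - s) ^ (p - 2) := two_le_add ha hb hprod
      nlinarith [h2le, mul_pos (by linarith : (0:ℝ) < p) (by linarith : (0:ℝ) < p - 1)]
  have hg20 : g2 0 = 0 := by
    simp [hg2, Real.one_rpow]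
  have hg2nonneg : ∀ s ∈ Ioo (0:ℝ) 1, 0 ≤ g2 s := by
    intro s hs
    rw [← hg20]
    exact hg2mono (by constructor <;> norm_num) ⟨le_of_lt hs.1, le_of_lt hs.2⟩ (le_of_lt hs.1)
  -- g1 monotone on Icc 0 1
  have hg1cont : Continuous g1 := ((hc1.add hc2).sub continuous_const).sub
      (continuous_const.mul (continuous_pow 2))
  have hg1mono : MonotoneOn g1 (Icc 0 1) := by
    apply monotoneOn_of_deriv_nonneg (convex_Icc 0 1) hg1cont.continuousOn
    · intro s hs
      rw [interior_Icc] at hs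
      exact ((hder1 s hs).differentiableAt).differentiableWithinAt
    · intro s hs
      rw [interior_Icc] at hs
      rw [(hder1 s hs).deriv]
      exact hg2nonneg s hs
  have hg10 : g1 0 = 0 := by
    norm_num [hg1, Real.one_rpow]
  have := hg1mono (show (0:ℝ) ∈ Icc (0:ℝ) 1 by constructor <;> norm_num) ⟨ht0, ht1⟩ ht0
  rw [hg10] at this
  simp only [hg1] at this
  linarith


/-- superadditivity of rpow on nonneg reals, exponent ≥ 1 -/
lemma add_rpow_le {X Y r : ℝ} (hX : 0 ≤ X) (hY : 0 ≤ Y) (hr : 1 ≤ r) :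
    X ^ r + Y ^ r ≤ (X + Y) ^ r := by
  have hr0 : (0:ℝ) < r := lt_of_lt_of_le one_pos hr
  have h1 : X ^ r ≤ X * (X + Y) ^ (r - 1) := by
    rcases eq_or_lt_of_le hX with h | h
    · simp [← h, Real.zero_rpow hr0.ne']
    · have : X ^ r = X * X ^ (r - 1) := by
        rw [← Real.rpow_one_add' (le_of_lt h) (by linarith)]; ring_nf
      rw [this]
      exact mul_le_mul_of_nonneg_left
        (Real.rpow_le_rpow (le_of_lt h) (by linarith) (by linarith)) hX
  have h2 : Y ^ r ≤ Y * (X + Y) ^ (r - 1) := by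
    rcases eq_or_lt_of_le hY with h | h
    · simp [← h, Real.zero_rpow hr0.ne']
    · have : Y ^ r = Y * Y ^ (r - 1) := by
        rw [← Real.rpow_one_add' (le_of_lt h) (by linarith)]; ring_nf
      rw [this]
      exact mul_le_mul_of_nonneg_left
        (Real.rpow_le_rpow (le_of_lt h) (by linarith) (by linarith)) hY
  have h3 : (X + Y) ^ r = (X + Y) * (X + Y) ^ (r - 1) := by
    rcases eq_or_lt_of_le (add_nonneg hX hY) with h | h
    · rw [← h, Real.zero_rpow hr0.ne', zero_mul]
    · rw [← Real.rpow_one_add' (le_of_lt h) (by linarith)]; ring_nf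
  calc X ^ r + Y ^ r ≤ X * (X+Y)^(r-1) + Y * (X+Y)^(r-1) := add_le_add h1 h2
    _ = (X + Y) * (X+Y)^(r-1) := by ring
    _ = (X + Y) ^ r := h3.symm

/-- convexity: (X+Y)^r ≤ 2^(r-1) (X^r + Y^r) -/
lemma rpow_add_le {X Y r : ℝ} (hX : 0 ≤ X) (hY : 0 ≤ Y) (hr : 1 ≤ r) :
    (X + Y) ^ r ≤ 2 ^ (r - 1) * (X ^ r + Y ^ r) := by
  have cv := (convexOn_rpow hr).2 (mem_Ici.2 hX) (mem_Ici.2 hY)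
    (by norm_num : (0:ℝ) ≤ 1/2) (by norm_num : (0:ℝ) ≤ 1/2) (by norm_num)
  simp only [smul_eq_mul] at cv
  -- cv : (1/2*X + 1/2*Y)^r ≤ 1/2 * X^r + 1/2 * Y^r
  have h2 : (0:ℝ) < 2 ^ r := Real.rpow_pos_of_pos two_pos r
  have key : (X + Y) ^ r = 2 ^ r * (1/2*X + 1/2*Y) ^ r := by
    rw [← Real.mul_rpow (by norm_num) (by linarith [hX, hY])]
    ring_nf
  rw [key]
  have : (2:ℝ) ^ (r - 1) = 2 ^ r / 2 := by
    rw [Real.rpow_sub two_pos, Real.rpow_one]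
  rw [this]
  calc 2 ^ r * (1/2*X + 1/2*Y) ^ r ≤ 2 ^ r * (1/2 * X^r + 1/2 * Y^r) :=
        mul_le_mul_of_nonneg_left cv (le_of_lt h2)
    _ = 2 ^ r / 2 * (X ^ r + Y ^ r) := by ring


/-- normalized BCL two-point inequality -/
lemma bcl_norm {p : ℝ} (hp1 : 1 < p) (hp2 : p ≤ 2) {t : ℝ} (ht0 : 0 ≤ t) (ht1 : t ≤ 1) :
    2 * (1 + (p - 1) * t ^ 2) ^ (p / 2) ≤ (1 + t) ^ p + (1 - t) ^ p := by
  have hb : (1 + (p - 1) * t ^ 2) ^ (p / 2) ≤ 1 + p / 2 * ((p - 1) * t ^ 2) := by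
    apply rpow_one_add_le_one_add_mul_self
    · nlinarith
    · linarith
    · linarith
  have := stepB hp1 hp2 ht0 ht1
  nlinarith [hb]

/-- BCL two-point inequality, case 0 ≤ v ≤ u -/
lemma bcl_point_aux {p : ℝ} (hp1 : 1 < p) (hp2 : p ≤ 2) {u v : ℝ} (hv : 0 ≤ v) (hvu : v ≤ u) :
    2 * (u ^ 2 + (p - 1) * v ^ 2) ^ (p / 2) ≤ (u + v) ^ p + (u - v) ^ p := by
  have hu : 0 ≤ u := le_trans hv hvu
  rcases eq_or_lt_of_le hu with h | hupos
  · -- u = 0, hence v = 0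
    have hv0 : v = 0 := le_antisymm (h ▸ hvu) hv
    simp [← h, hv0, Real.zero_rpow (by positivity : p / 2 ≠ 0),
      Real.zero_rpow (by positivity : p ≠ 0)]
  · set t := v / u with htdef
    have ht0 : 0 ≤ t := div_nonneg hv hu
    have ht1 : t ≤ 1 := (div_le_one hupos).2 hvu
    have key := bcl_norm hp1 hp2 ht0 ht1
    have hmul := mul_le_mul_of_nonneg_left key
      (le_of_lt (Real.rpow_pos_of_pos hupos p))
    -- u^p * (2 * (1+(p-1)t^2)^(p/2)) ≤ u^p * ((1+t)^p + (1-t)^p)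
    have e1 : u ^ p * (2 * (1 + (p - 1) * t ^ 2) ^ (p / 2))
        = 2 * (u ^ 2 + (p - 1) * v ^ 2) ^ (p / 2) := by
      have hup : u ^ p = (u ^ 2) ^ (p / 2) := by
        rw [← Real.rpow_natCast_mul hu 2 (p / 2),
          show ((2:ℕ):ℝ) * (p / 2) = p by push_cast; ring]
      rw [hup, ← mul_assoc, mul_comm ((u ^ 2 : ℝ) ^ (p/2)) 2, mul_assoc,
        ← Real.mul_rpow (by positivity) (by nlinarith)]
      congr 2
      simp only [htdef]
      field_simp
    have e2 : u ^ p * ((1 + t) ^ p + (1 - t) ^ p) = (u + v) ^ p + (u - v) ^ p := by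
      have h1t : u * (1 + t) = u + v := by simp only [htdef]; field_simp
      have h2t : u * (1 - t) = u - v := by simp only [htdef]; field_simp
      rw [mul_add, ← Real.mul_rpow hu (by linarith), ← Real.mul_rpow hu (by linarith),
        h1t, h2t]
    rw [e1, e2] at hmul
    exact hmul

/-- BCL two-point inequality, case 0 ≤ u, |v| ≤ u -/
lemma bcl_point_aux2 {p : ℝ} (hp1 : 1 < p) (hp2 : p ≤ 2) {u v : ℝ} (hu : 0 ≤ u)
    (hvu : |v| ≤ u) : 2 * (u ^ 2 + (p - 1) * v ^ 2) ^ (p / 2) ≤ |u + v| ^ p + |u - v| ^ p := by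
  have h1 : -u ≤ v := neg_le_of_abs_le hvu
  have h2 : v ≤ u := le_of_abs_le hvu
  rcases le_total 0 v with hv | hv
  · have := bcl_point_aux hp1 hp2 hv h2
    rwa [abs_of_nonneg (by linarith), abs_of_nonneg (by linarith)]
  · have := bcl_point_aux hp1 hp2 (by linarith : 0 ≤ -v) (by linarith : -v ≤ u)
    rw [abs_of_nonneg (by linarith), abs_of_nonneg (by linarith)]
    have ev : (-v) ^ 2 = v ^ 2 := by ring
    rw [ev] at this
    calc 2 * (u ^ 2 + (p - 1) * v ^ 2) ^ (p / 2)
        ≤ (u + -v) ^ p + (u - -v) ^ p := this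
      _ = (u + v) ^ p + (u - v) ^ p := by rw [add_comm]; congr 2 <;> ring_nf

/-- BCL two-point inequality, general -/
lemma bcl_point {p : ℝ} (hp1 : 1 < p) (hp2 : p ≤ 2) (u v : ℝ) :
    2 * (u ^ 2 + (p - 1) * v ^ 2) ^ (p / 2) ≤ |u + v| ^ p + |u - v| ^ p := by
  have habs : ∀ w z : ℝ, 0 ≤ w → |z| ≤ w →
      2 * (w ^ 2 + (p - 1) * z ^ 2) ^ (p / 2) ≤ |w + z| ^ p + |w - z| ^ p := by
    intro w z hw hzw
    rcases le_total 0 w with _ | hwneg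
    · exact bcl_point_aux2 hp1 hp2 hw hzw
    · exact bcl_point_aux2 hp1 hp2 hw hzw
  rcases le_total |v| |u| with h | h
  · rcases le_total 0 u with hu | hu
    · exact habs u v hu (le_trans h (le_of_eq (abs_of_nonneg hu)))
    · have := habs (-u) (-v) (by linarith) (by rwa [abs_neg, ← abs_of_nonpos hu])
      have ev : (-u) ^ 2 = u ^ 2 ∧ (-v) ^ 2 = v ^ 2 := ⟨by ring, by ring⟩
      rw [ev.1, ev.2] at this
      calc 2 * (u ^ 2 + (p - 1) * v ^ 2) ^ (p / 2)
          ≤ |(-u) + (-v)| ^ p + |(-u) - (-v)| ^ p := this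
        _ = |u + v| ^ p + |u - v| ^ p := by
            rw [show (-u) + (-v) = -(u+v) by ring, show (-u) - (-v) = -(u-v) by ring,
              abs_neg, abs_neg]
  · -- |u| ≤ |v| : swap roles
    have hq : 2 * (v ^ 2 + (p - 1) * u ^ 2) ^ (p / 2) ≤ |v + u| ^ p + |v - u| ^ p := by
      rcases le_total 0 v with hv | hv
      · exact habs v u hv (le_trans h (le_of_eq (abs_of_nonneg hv)))
      · have := habs (-v) (-u) (by linarith) (by rwa [abs_neg, ← abs_of_nonpos hv])
        have ev : (-u) ^ 2 = u ^ 2 ∧ (-v) ^ 2 = v ^ 2 := ⟨by ring, by ring⟩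
        rw [ev.1, ev.2] at this
        calc 2 * (v ^ 2 + (p - 1) * u ^ 2) ^ (p / 2)
            ≤ |(-v) + (-u)| ^ p + |(-v) - (-u)| ^ p := this
          _ = |v + u| ^ p + |v - u| ^ p := by
              rw [show (-v) + (-u) = -(v+u) by ring, show (-v) - (-u) = -(v-u) by ring,
                abs_neg, abs_neg]
    have hsq : u ^ 2 ≤ v ^ 2 := by
      have := sq_abs u ▸ sq_abs v ▸ pow_le_pow_left₀ (abs_nonneg u) h 2
      nlinarith [sq_abs u, sq_abs v, pow_le_pow_left₀ (abs_nonneg u) h 2]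
    have hmono : (u ^ 2 + (p - 1) * v ^ 2) ^ (p / 2) ≤ (v ^ 2 + (p - 1) * u ^ 2) ^ (p / 2) := by
      apply Real.rpow_le_rpow (by nlinarith) (by nlinarith) (by positivity)
    calc 2 * (u ^ 2 + (p - 1) * v ^ 2) ^ (p / 2)
        ≤ 2 * (v ^ 2 + (p - 1) * u ^ 2) ^ (p / 2) := by linarith
      _ ≤ |v + u| ^ p + |v - u| ^ p := hq
      _ = |u + v| ^ p + |u - v| ^ p := by rw [add_comm v u, abs_sub_comm v u]

/-- Clarkson-type pointwise inequality for p ≥ 2 -/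
lemma clarkson_point {p : ℝ} (hp2 : 2 ≤ p) (u v : ℝ) :
    |u + v| ^ p + |u - v| ^ p ≤ 2 ^ (p - 1) * (|u| ^ p + |v| ^ p) := by
  have h1 : |u + v| ^ p + |u - v| ^ p ≤ (|u + v| ^ 2 + |u - v| ^ 2) ^ (p / 2) := by
    have e1 : |u + v| ^ p = (|u + v| ^ 2) ^ (p / 2) := by
      rw [← Real.rpow_natCast_mul (abs_nonneg _) 2 (p / 2),
        show ((2:ℕ):ℝ) * (p / 2) = p by push_cast; ring]
    have e2 : |u - v| ^ p = (|u - v| ^ 2) ^ (p / 2) := by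
      rw [← Real.rpow_natCast_mul (abs_nonneg _) 2 (p / 2),
        show ((2:ℕ):ℝ) * (p / 2) = p by push_cast; ring]
    rw [e1, e2]
    exact add_rpow_le (by positivity) (by positivity) (by linarith)
  have e3 : |u + v| ^ 2 + |u - v| ^ 2 = 2 * u ^ 2 + 2 * v ^ 2 := by
    rw [sq_abs, sq_abs]; ring
  have h2 : (2 * u ^ 2 + 2 * v ^ 2) ^ (p / 2)
      ≤ 2 ^ (p / 2) * (2 ^ (p / 2 - 1) * ((u ^ 2) ^ (p/2) + (v ^ 2) ^ (p/2))) := by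
    have e4 : (2 * u ^ 2 + 2 * v ^ 2 : ℝ) = 2 * (u ^ 2 + v ^ 2) := by ring
    rw [e4, Real.mul_rpow (by norm_num) (by positivity)]
    exact mul_le_mul_of_nonneg_left
      (rpow_add_le (by positivity) (by positivity) (by linarith)) (by positivity)
  have e5 : (u ^ 2 : ℝ) ^ (p / 2) = |u| ^ p := by
    rw [← sq_abs, ← Real.rpow_natCast_mul (abs_nonneg _) 2 (p / 2),
      show ((2:ℕ):ℝ) * (p / 2) = p by push_cast; ring]
  have e6 : (v ^ 2 : ℝ) ^ (p / 2) = |v| ^ p := by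
    rw [← sq_abs, ← Real.rpow_natCast_mul (abs_nonneg _) 2 (p / 2),
      show ((2:ℕ):ℝ) * (p / 2) = p by push_cast; ring]
  have e7 : (2:ℝ) ^ (p / 2) * 2 ^ (p / 2 - 1) = 2 ^ (p - 1) := by
    rw [← Real.rpow_add two_pos]; ring_nf
  calc |u + v| ^ p + |u - v| ^ p ≤ (|u + v| ^ 2 + |u - v| ^ 2) ^ (p / 2) := h1
    _ = (2 * u ^ 2 + 2 * v ^ 2) ^ (p / 2) := by rw [e3]
    _ ≤ 2 ^ (p / 2) * (2 ^ (p / 2 - 1) * ((u ^ 2) ^ (p/2) + (v ^ 2) ^ (p/2))) := h2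
    _ = 2 ^ (p - 1) * (|u| ^ p + |v| ^ p) := by rw [e5, e6, ← mul_assoc, e7]


/-- two-point concavity for ENNReal rpow with exponent ≤ 1 -/
lemma concave2 {r : ℝ} (hr0 : 0 < r) (hr1 : r ≤ 1) (w₁ w₂ z₁ z₂ : ℝ≥0∞) (hw : w₁ + w₂ = 1) :
    w₁ * z₁ ^ r + w₂ * z₂ ^ r ≤ (w₁ * z₁ + w₂ * z₂) ^ r := by
  have h := ENNReal.rpow_arith_mean_le_arith_mean2_rpow w₁ w₂ (z₁ ^ r) (z₂ ^ r) hw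
    (p := 1 / r) (by rw [le_div_iff₀ hr0]; linarith)
  have e1 : ∀ z : ℝ≥0∞, (z ^ r) ^ (1 / r) = z := by
    intro z
    rw [← ENNReal.rpow_mul, mul_one_div, div_self hr0.ne', ENNReal.rpow_one]
  rw [e1, e1] at h
  calc w₁ * z₁ ^ r + w₂ * z₂ ^ r
      = ((w₁ * z₁ ^ r + w₂ * z₂ ^ r) ^ (1 / r)) ^ r := by
        rw [← ENNReal.rpow_mul, one_div, inv_mul_cancel₀ hr0.ne', ENNReal.rpow_one]
    _ ≤ (w₁ * z₁ + w₂ * z₂) ^ r :=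
        ENNReal.rpow_le_rpow h (le_of_lt hr0)

variable {α : Type*} [MeasurableSpace α] {μ : Measure α}

/-- reverse Minkowski inequality for exponent r ≤ 1 -/
lemma revMink {r : ℝ} (hr0 : 0 < r) (hr1 : r ≤ 1) {F G : α → ℝ≥0∞}
    (hF : AEMeasurable F μ) (hG : AEMeasurable G μ) :
    (∫⁻ t, F t ^ r ∂μ) ^ (1 / r) + (∫⁻ t, G t ^ r ∂μ) ^ (1 / r)
      ≤ (∫⁻ t, (F t + G t) ^ r ∂μ) ^ (1 / r) := by
  set A := (∫⁻ t, F t ^ r ∂μ) ^ (1 / r) with hA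
  set B := (∫⁻ t, G t ^ r ∂μ) ^ (1 / r) with hB
  set C := (∫⁻ t, (F t + G t) ^ r ∂μ) ^ (1 / r) with hC
  have hr0' : (0:ℝ) < 1 / r := by positivity
  have hAC : A ≤ C := by
    apply ENNReal.rpow_le_rpow _ (le_of_lt hr0')
    exact lintegral_mono fun t => ENNReal.rpow_le_rpow le_self_add (le_of_lt hr0)
  have hBC : B ≤ C := by
    apply ENNReal.rpow_le_rpow _ (le_of_lt hr0')
    exact lintegral_mono fun t => ENNReal.rpow_le_rpow le_add_self (le_of_lt hr0)
  rcases eq_or_ne A 0 with hA0 | hA0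
  · rw [hA0, zero_add]; exact hBC
  rcases eq_or_ne B 0 with hB0 | hB0
  · rw [hB0, add_zero]; exact hAC
  rcases eq_or_ne A ⊤ with hAt | hAt
  · rw [hAt] at hAC; rw [top_le_iff.mp hAC]; exact le_top
  rcases eq_or_ne B ⊤ with hBt | hBt
  · rw [hBt] at hBC; rw [top_le_iff.mp hBC]; exact le_top
  -- main case
  set S := A + B with hS
  have hS0 : S ≠ 0 := by simp [hS, hA0]
  have hSt : S ≠ ⊤ := by simp [hS, hAt, hBt, ENNReal.add_ne_top]
  have hw : A / S + B / S = 1 := by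
    rw [ENNReal.div_add_div_same, hS, ENNReal.div_self hS0 hSt]
  have hptwise : ∀ t, (A/S) * ((S/A) * F t) ^ r + (B/S) * ((S/B) * G t) ^ r
      ≤ (F t + G t) ^ r := by
    intro t
    have h := concave2 hr0 hr1 (A/S) (B/S) ((S/A) * F t) ((S/B) * G t) hw
    have hAS0 : A/S ≠ 0 := by simp [ENNReal.div_eq_zero_iff, hA0, hSt]
    have hASt : A/S ≠ ⊤ := by simp [ENNReal.div_eq_top, hAt, hS0]
    have hBS0 : B/S ≠ 0 := by simp [ENNReal.div_eq_zero_iff, hB0, hSt]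
    have hBSt : B/S ≠ ⊤ := by simp [ENNReal.div_eq_top, hBt, hS0]
    have e1 : A/S * (S/A * F t) = F t := by
      rw [← mul_assoc, ← ENNReal.inv_div (Or.inl hSt) (Or.inl hS0),
        ENNReal.mul_inv_cancel hAS0 hASt, one_mul]
    have e2 : B/S * (S/B * G t) = G t := by
      rw [← mul_assoc, ← ENNReal.inv_div (Or.inl hSt) (Or.inl hS0),
        ENNReal.mul_inv_cancel hBS0 hBSt, one_mul]
    rwa [e1, e2] at h
  have hint : ∫⁻ t, ((A/S) * ((S/A) * F t) ^ r + (B/S) * ((S/B) * G t) ^ r) ∂μ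
      ≤ ∫⁻ t, (F t + G t) ^ r ∂μ := lintegral_mono fun t => hptwise t
  have hmeas1 : AEMeasurable (fun t => (A/S) * ((S/A) * F t) ^ r) μ :=
    ((hF.const_mul _).pow_const r).const_mul _
  have hsplit : ∫⁻ t, ((A/S) * ((S/A) * F t) ^ r + (B/S) * ((S/B) * G t) ^ r) ∂μ
      = (A/S) * (S/A) ^ r * (∫⁻ t, F t ^ r ∂μ) + (B/S) * (S/B) ^ r * (∫⁻ t, G t ^ r ∂μ) := by
    rw [lintegral_add_left' hmeas1]
    congr 1
    · rw [lintegral_const_mul'' _ ((hF.const_mul _).pow_const r)]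
      simp_rw [ENNReal.mul_rpow_of_nonneg _ _ (le_of_lt hr0)]
      rw [lintegral_const_mul'' _ (hF.pow_const r), ← mul_assoc]
    · rw [lintegral_const_mul'' _ ((hG.const_mul _).pow_const r)]
      simp_rw [ENNReal.mul_rpow_of_nonneg _ _ (le_of_lt hr0)]
      rw [lintegral_const_mul'' _ (hG.pow_const r), ← mul_assoc]
  have hIA : (∫⁻ t, F t ^ r ∂μ) = A ^ r := by
    rw [hA, ← ENNReal.rpow_mul, one_div, inv_mul_cancel₀ hr0.ne', ENNReal.rpow_one]
  have hIB : (∫⁻ t, G t ^ r ∂μ) = B ^ r := by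
    rw [hB, ← ENNReal.rpow_mul, one_div, inv_mul_cancel₀ hr0.ne', ENNReal.rpow_one]
  have hterm1 : (A/S) * (S/A) ^ r * A ^ r = A * S ^ r / S := by
    rw [mul_assoc, ← ENNReal.mul_rpow_of_nonneg _ _ (le_of_lt hr0),
      ENNReal.div_mul_cancel hA0 hAt, div_eq_mul_inv, div_eq_mul_inv, mul_right_comm]
  have hterm2 : (B/S) * (S/B) ^ r * B ^ r = B * S ^ r / S := by
    rw [mul_assoc, ← ENNReal.mul_rpow_of_nonneg _ _ (le_of_lt hr0),
      ENNReal.div_mul_cancel hB0 hBt, div_eq_mul_inv, div_eq_mul_inv, mul_right_comm]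
  have hsum : A * S ^ r / S + B * S ^ r / S = S ^ r := by
    rw [ENNReal.div_add_div_same, ← add_mul, ← hS, mul_comm S (S ^ r), div_eq_mul_inv,
      mul_assoc, ENNReal.mul_inv_cancel hS0 hSt, mul_one]
  have hfinal : S ^ r ≤ ∫⁻ t, (F t + G t) ^ r ∂μ := by
    calc S ^ r = (A/S) * (S/A) ^ r * (∫⁻ t, F t ^ r ∂μ)
        + (B/S) * (S/B) ^ r * (∫⁻ t, G t ^ r ∂μ) := by
          rw [hIA, hIB, hterm1, hterm2, hsum]
      _ = ∫⁻ t, ((A/S) * ((S/A) * F t) ^ r + (B/S) * ((S/B) * G t) ^ r) ∂μ := hsplit.symm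
      _ ≤ ∫⁻ t, (F t + G t) ^ r ∂μ := hint
  calc A + B = S := rfl
    _ = (S ^ r) ^ (1/r) := by
        rw [← ENNReal.rpow_mul, mul_one_div, div_self hr0.ne', ENNReal.rpow_one]
    _ ≤ C := ENNReal.rpow_le_rpow hfinal (le_of_lt hr0')


section LpNorm
variable {p : ℝ}

lemma ofReal_ne_zero' (hp0 : 0 < p) : ENNReal.ofReal p ≠ 0 := by
  simp [ENNReal.ofReal_eq_zero]; linarith

lemma norm_eq_lintegral (hp0 : 0 < p) (f : Lp ℝ (ENNReal.ofReal p) μ) :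
    ‖f‖ = (∫⁻ t, (‖f t‖₊ : ℝ≥0∞) ^ p ∂μ).toReal ^ (1/p) := by
  rw [Lp.norm_def, eLpNorm_eq_lintegral_rpow_enorm_toReal (ofReal_ne_zero' hp0) ENNReal.ofReal_ne_top]
  simp_rw [enorm_eq_nnnorm]
  rw [ENNReal.toReal_ofReal hp0.le, ENNReal.toReal_rpow]

lemma lintegral_lt_top' (hp0 : 0 < p) (f : Lp ℝ (ENNReal.ofReal p) μ) :
    ∫⁻ t, (‖f t‖₊ : ℝ≥0∞) ^ p ∂μ ≠ ⊤ := by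
  have h := Lp.eLpNorm_lt_top f
  simp only [eLpNorm_eq_lintegral_rpow_enorm_toReal (ofReal_ne_zero' hp0) ENNReal.ofReal_ne_top,
    enorm_eq_nnnorm, ENNReal.toReal_ofReal hp0.le] at h
  intro htop
  rw [htop, ENNReal.top_rpow_of_pos (by positivity)] at h
  exact (lt_irrefl _ h).elim

lemma norm_rpow_eq (hp0 : 0 < p) (f : Lp ℝ (ENNReal.ofReal p) μ) :
    ‖f‖ ^ p = (∫⁻ t, (‖f t‖₊ : ℝ≥0∞) ^ p ∂μ).toReal := by
  rw [norm_eq_lintegral hp0 f, ← Real.rpow_mul ENNReal.toReal_nonneg, one_div,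
    inv_mul_cancel₀ hp0.ne', Real.rpow_one]

lemma coe_nnnorm_rpow_eq (u : ℝ) (r : ℝ) (hr : 0 ≤ r) :
    (‖u‖₊ : ℝ≥0∞) ^ r = ENNReal.ofReal (|u| ^ r) := by
  rw [← enorm_eq_nnnorm, ← ofReal_norm, Real.norm_eq_abs,
    ENNReal.ofReal_rpow_of_nonneg (abs_nonneg u) hr]

/-- Clarkson inequality in Lp, p ≥ 2 -/
lemma clarkson_Lp (hp2 : 2 ≤ p) (f g : Lp ℝ (ENNReal.ofReal p) μ) :
    ‖f + g‖ ^ p + ‖f - g‖ ^ p ≤ 2 ^ (p - 1) * (‖f‖ ^ p + ‖g‖ ^ p) := by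
  have hp0 : (0:ℝ) < p := by linarith
  have hmf : AEMeasurable (fun t => (‖f t‖₊ : ℝ≥0∞) ^ p) μ :=
    (Lp.aestronglyMeasurable f).enorm.pow_const p
  have hmg : AEMeasurable (fun t => (‖g t‖₊ : ℝ≥0∞) ^ p) μ :=
    (Lp.aestronglyMeasurable g).enorm.pow_const p
  have hmfg : AEMeasurable (fun t => (‖(f + g) t‖₊ : ℝ≥0∞) ^ p) μ :=
    (Lp.aestronglyMeasurable (f + g)).enorm.pow_const p
  have hpt : ∀ᵐ t ∂μ, (‖(f + g) t‖₊ : ℝ≥0∞) ^ p + (‖(f - g) t‖₊ : ℝ≥0∞) ^ p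
      ≤ ENNReal.ofReal (2 ^ (p - 1)) * ((‖f t‖₊ : ℝ≥0∞) ^ p + (‖g t‖₊ : ℝ≥0∞) ^ p) := by
    filter_upwards [Lp.coeFn_add f g, Lp.coeFn_sub f g] with t h1 h2
    rw [h1, h2]
    simp only [Pi.add_apply, Pi.sub_apply]
    rw [coe_nnnorm_rpow_eq _ p hp0.le, coe_nnnorm_rpow_eq _ p hp0.le,
      coe_nnnorm_rpow_eq _ p hp0.le, coe_nnnorm_rpow_eq _ p hp0.le,
      ← ENNReal.ofReal_add (by positivity) (by positivity),
      ← ENNReal.ofReal_add (by positivity) (by positivity),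
      ← ENNReal.ofReal_mul (by positivity)]
    exact ENNReal.ofReal_le_ofReal (clarkson_point hp2 (f t) (g t))
  have hint := lintegral_mono_ae hpt
  rw [lintegral_add_left' hmfg] at hint
  rw [lintegral_const_mul'' _ (show AEMeasurable (fun t => (‖f t‖₊ : ℝ≥0∞) ^ p + (‖g t‖₊ : ℝ≥0∞) ^ p) μ from hmf.add hmg), lintegral_add_left' hmf] at hint
  -- pass to toReal
  have hne : ENNReal.ofReal (2 ^ (p - 1)) * ((∫⁻ t, (‖f t‖₊ : ℝ≥0∞) ^ p ∂μ)
      + ∫⁻ t, (‖g t‖₊ : ℝ≥0∞) ^ p ∂μ) ≠ ⊤ :=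
    ENNReal.mul_ne_top ENNReal.ofReal_ne_top
      (by simp [ENNReal.add_ne_top, lintegral_lt_top' hp0 f, lintegral_lt_top' hp0 g])
  have := ENNReal.toReal_mono hne hint
  rw [ENNReal.toReal_add (lintegral_lt_top' hp0 (f+g)) (lintegral_lt_top' hp0 (f-g)),
    ENNReal.toReal_mul, ENNReal.toReal_ofReal (by positivity),
    ENNReal.toReal_add (lintegral_lt_top' hp0 f) (lintegral_lt_top' hp0 g)] at this
  rw [norm_rpow_eq hp0, norm_rpow_eq hp0, norm_rpow_eq hp0, norm_rpow_eq hp0]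
  exact this

/-- BCL inequality in Lp, 1 < p ≤ 2 -/
lemma bcl_Lp (hp1 : 1 < p) (hp2 : p ≤ 2) (f g : Lp ℝ (ENNReal.ofReal p) μ) :
    ‖f‖ ^ (2:ℝ) + (p - 1) * ‖g‖ ^ (2:ℝ)
      ≤ ((‖f + g‖ ^ p + ‖f - g‖ ^ p) / 2) ^ (2 / p) := by
  have hp0 : (0:ℝ) < p := by linarith
  set r : ℝ := p / 2 with hrdef
  have hr0 : 0 < r := by positivity
  have hr1 : r ≤ 1 := by rw [hrdef]; linarith
  set F : α → ℝ≥0∞ := fun t => (‖f t‖₊ : ℝ≥0∞) ^ (2:ℝ) with hF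
  set G : α → ℝ≥0∞ := fun t => ENNReal.ofReal (p - 1) * (‖g t‖₊ : ℝ≥0∞) ^ (2:ℝ) with hG
  have hmF : AEMeasurable F μ := (Lp.aestronglyMeasurable f).enorm.pow_const (2:ℝ)
  have hmG : AEMeasurable G μ :=
    ((Lp.aestronglyMeasurable g).enorm.pow_const (2:ℝ)).const_mul _
  have hFr : ∀ t, F t ^ r = (‖f t‖₊ : ℝ≥0∞) ^ p := by
    intro t
    rw [hF, ← ENNReal.rpow_mul, show (2:ℝ) * r = p by rw [hrdef]; ring]
  have hGr : ∀ t, G t ^ r = ENNReal.ofReal ((p - 1) ^ r) * (‖g t‖₊ : ℝ≥0∞) ^ p := by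
    intro t
    rw [hG, ENNReal.mul_rpow_of_nonneg _ _ hr0.le, ← ENNReal.rpow_mul,
      ENNReal.ofReal_rpow_of_nonneg (by linarith) hr0.le,
      show (2:ℝ) * r = p by rw [hrdef]; ring]
  have hIF : ∫⁻ t, F t ^ r ∂μ = ∫⁻ t, (‖f t‖₊ : ℝ≥0∞) ^ p ∂μ := by
    simp_rw [hFr]
  have hIG : ∫⁻ t, G t ^ r ∂μ
      = ENNReal.ofReal ((p - 1) ^ r) * ∫⁻ t, (‖g t‖₊ : ℝ≥0∞) ^ p ∂μ := by
    simp_rw [hGr]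
    exact lintegral_const_mul'' _ ((Lp.aestronglyMeasurable g).enorm.pow_const p)
  -- pointwise upper bound for (F+G)^r
  have hpt : ∀ᵐ t ∂μ, (F t + G t) ^ r
      ≤ 2⁻¹ * ((‖(f + g) t‖₊ : ℝ≥0∞) ^ p + (‖(f - g) t‖₊ : ℝ≥0∞) ^ p) := by
    filter_upwards [Lp.coeFn_add f g, Lp.coeFn_sub f g] with t h1 h2
    rw [h1, h2]
    simp only [Pi.add_apply, Pi.sub_apply]
    have e1 : F t = ENNReal.ofReal ((f t) ^ 2) := by
      simp only [hF]
      rw [coe_nnnorm_rpow_eq (f t) 2 (by norm_num)]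
      congr 1
      rw [show |f t| ^ (2:ℝ) = |f t| ^ (2:ℕ) by
        rw [← Real.rpow_natCast |f t| 2]; norm_num]
      rw [sq_abs]
    have e2 : G t = ENNReal.ofReal ((p - 1) * (g t) ^ 2) := by
      simp only [hG]
      rw [coe_nnnorm_rpow_eq (g t) 2 (by norm_num),
        ← ENNReal.ofReal_mul (by linarith)]
      congr 2
      rw [show |g t| ^ (2:ℝ) = |g t| ^ (2:ℕ) by
        rw [← Real.rpow_natCast |g t| 2]; norm_num]
      rw [sq_abs]
    rw [e1, e2, ← ENNReal.ofReal_add (by positivity)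
        (mul_nonneg (by linarith) (sq_nonneg _)),
      ENNReal.ofReal_rpow_of_nonneg (by nlinarith [sq_nonneg (f t), sq_nonneg (g t)]) hr0.le,
      coe_nnnorm_rpow_eq _ p hp0.le, coe_nnnorm_rpow_eq _ p hp0.le,
      ← ENNReal.ofReal_add (by positivity) (by positivity)]
    have hb := bcl_point hp1 hp2 (f t) (g t)
    calc ENNReal.ofReal (((f t) ^ 2 + (p - 1) * (g t) ^ 2) ^ r)
        ≤ ENNReal.ofReal ((|f t + g t| ^ p + |f t - g t| ^ p) / 2) := by
          apply ENNReal.ofReal_le_ofReal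
          rw [hrdef]; linarith
      _ = 2⁻¹ * ENNReal.ofReal (|f t + g t| ^ p + |f t - g t| ^ p) := by
          rw [ENNReal.ofReal_div_of_pos two_pos, ENNReal.ofReal_ofNat,
            ENNReal.div_eq_inv_mul]
  have hint := lintegral_mono_ae hpt
  have hmfgp : AEMeasurable (fun t => (‖(f + g) t‖₊ : ℝ≥0∞) ^ p) μ :=
    (Lp.aestronglyMeasurable (f + g)).enorm.pow_const p
  rw [lintegral_const_mul'' _ (show AEMeasurable (fun t => (‖(f + g) t‖₊ : ℝ≥0∞) ^ p + (‖(f - g) t‖₊ : ℝ≥0∞) ^ p) μ from hmfgp.add ((Lp.aestronglyMeasurable (f - g)).enorm.pow_const p)),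
    lintegral_add_left' hmfgp] at hint
  -- apply reverse Minkowski
  have hrm := revMink hr0 hr1 hmF hmG
  rw [hIF, hIG] at hrm
  have hchain : (∫⁻ t, (‖f t‖₊ : ℝ≥0∞) ^ p ∂μ) ^ (1/r)
      + ENNReal.ofReal (p - 1) * (∫⁻ t, (‖g t‖₊ : ℝ≥0∞) ^ p ∂μ) ^ (1/r)
      ≤ (2⁻¹ * ((∫⁻ t, (‖(f+g) t‖₊ : ℝ≥0∞) ^ p ∂μ)
          + ∫⁻ t, (‖(f-g) t‖₊ : ℝ≥0∞) ^ p ∂μ)) ^ (1/r) := by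
    have e3 : (ENNReal.ofReal ((p - 1) ^ r) * ∫⁻ t, (‖g t‖₊ : ℝ≥0∞) ^ p ∂μ) ^ (1/r)
        = ENNReal.ofReal (p - 1) * (∫⁻ t, (‖g t‖₊ : ℝ≥0∞) ^ p ∂μ) ^ (1/r) := by
      rw [ENNReal.mul_rpow_of_nonneg _ _ (by positivity),
        ENNReal.ofReal_rpow_of_nonneg (Real.rpow_nonneg (by linarith) r) (by positivity),
        ← Real.rpow_mul (by linarith), mul_one_div, div_self hr0.ne', Real.rpow_one]
    calc (∫⁻ t, (‖f t‖₊ : ℝ≥0∞) ^ p ∂μ) ^ (1/r)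
          + ENNReal.ofReal (p - 1) * (∫⁻ t, (‖g t‖₊ : ℝ≥0∞) ^ p ∂μ) ^ (1/r)
        = (∫⁻ t, F t ^ r ∂μ) ^ (1/r) + (∫⁻ t, G t ^ r ∂μ) ^ (1/r) := by rw [hIF, hIG, e3]
      _ ≤ (∫⁻ t, (F t + G t) ^ r ∂μ) ^ (1/r) := revMink hr0 hr1 hmF hmG
      _ ≤ _ := ENNReal.rpow_le_rpow hint (by positivity)
  -- pass to toReal
  set If := ∫⁻ t, (‖f t‖₊ : ℝ≥0∞) ^ p ∂μ with hIfd
  set Ig := ∫⁻ t, (‖g t‖₊ : ℝ≥0∞) ^ p ∂μ with hIgd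
  set Ia := ∫⁻ t, (‖(f+g) t‖₊ : ℝ≥0∞) ^ p ∂μ with hIad
  set Ib := ∫⁻ t, (‖(f-g) t‖₊ : ℝ≥0∞) ^ p ∂μ with hIbd
  have hIfne := lintegral_lt_top' hp0 f
  have hIgne := lintegral_lt_top' hp0 g
  have hIane := lintegral_lt_top' hp0 (f+g)
  have hIbne := lintegral_lt_top' hp0 (f-g)
  have hRne : (2⁻¹ * (Ia + Ib)) ^ (1/r) ≠ ⊤ := by
    apply ENNReal.rpow_ne_top_of_nonneg (by positivity)
    exact ENNReal.mul_ne_top (by norm_num) (ENNReal.add_ne_top.2 ⟨hIane, hIbne⟩)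
  have htr := ENNReal.toReal_mono hRne hchain
  rw [ENNReal.toReal_add (ENNReal.rpow_ne_top_of_nonneg (by positivity) hIfne)
      (ENNReal.mul_ne_top ENNReal.ofReal_ne_top
        (ENNReal.rpow_ne_top_of_nonneg (by positivity) hIgne)),
    ENNReal.toReal_mul, ENNReal.toReal_ofReal (by linarith),
    ← ENNReal.toReal_rpow, ← ENNReal.toReal_rpow, ← ENNReal.toReal_rpow,
    ENNReal.toReal_mul, ENNReal.toReal_add hIane hIbne] at htr
  have h2inv : ((2:ℝ≥0∞)⁻¹).toReal = 2⁻¹ := by simp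
  rw [h2inv] at htr
  -- identify with norms
  have n1 : ‖f‖ ^ (2:ℝ) = If.toReal ^ (2/p) := by
    rw [norm_eq_lintegral hp0 f, ← Real.rpow_mul ENNReal.toReal_nonneg]
    congr 1
    ring
  have n2 : ‖g‖ ^ (2:ℝ) = Ig.toReal ^ (2/p) := by
    rw [norm_eq_lintegral hp0 g, ← Real.rpow_mul ENNReal.toReal_nonneg]
    congr 1
    ring
  have n3 : ‖f + g‖ ^ p = Ia.toReal := norm_rpow_eq hp0 (f+g)
  have n4 : ‖f - g‖ ^ p = Ib.toReal := norm_rpow_eq hp0 (f-g)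
  rw [n1, n2, n3, n4]
  have e4 : (2:ℝ)⁻¹ * (Ia.toReal + Ib.toReal) = (Ia.toReal + Ib.toReal) / 2 := by ring
  rw [e4] at htr
  have e5 : (1:ℝ)/r = 2/p := by rw [hrdef]; field_simp
  rw [e5] at htr
  exact htr


/-- Unified uniform convexity inequality in Lp, q = max p 2 -/
lemma key_ineq {p : ℝ} (hp1 : 1 < p) (f g : Lp ℝ (ENNReal.ofReal p) μ) :
    ‖f + g‖ ^ max p 2 + min 1 (p - 1) * ‖f - g‖ ^ max p 2
      ≤ 2 ^ (max p 2 - 1) * (‖f‖ ^ max p 2 + ‖g‖ ^ max p 2) := by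
  haveI : Fact (1 ≤ ENNReal.ofReal p) := ⟨ENNReal.one_le_ofReal.2 hp1.le⟩
  rcases le_total 2 p with h2p | hp2
  · rw [max_eq_left h2p, min_eq_left (by linarith)]
    have h := clarkson_Lp h2p f g
    linarith
  · rw [max_eq_right hp2, min_eq_right (by linarith)]
    have hp0 : (0:ℝ) < p := by linarith
    have hb := bcl_Lp hp1 hp2 (f + g) (f - g)
    have e1 : (f + g) + (f - g) = (2:ℝ) • f := by
      rw [two_smul]; abel
    have e2 : (f + g) - (f - g) = (2:ℝ) • g := by
      rw [two_smul]; abel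
    have hn1 : ‖(f + g) + (f - g)‖ = 2 * ‖f‖ := by
      rw [e1, norm_smul]; simp
    have hn2 : ‖(f + g) - (f - g)‖ = 2 * ‖g‖ := by
      rw [e2, norm_smul]; simp
    rw [hn1, hn2] at hb
    set X := ‖f‖ ^ p with hX
    set Y := ‖g‖ ^ p with hY
    have hX0 : 0 ≤ X := Real.rpow_nonneg (norm_nonneg f) p
    have hY0 : 0 ≤ Y := Real.rpow_nonneg (norm_nonneg g) p
    have e3 : (2 * ‖f‖) ^ p = 2 ^ p * X := by
      rw [hX, Real.mul_rpow (by norm_num) (norm_nonneg f)]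
    have e4 : (2 * ‖g‖) ^ p = 2 ^ p * Y := by
      rw [hY, Real.mul_rpow (by norm_num) (norm_nonneg g)]
    rw [e3, e4] at hb
    have e5 : (2 ^ p * X + 2 ^ p * Y) / 2 = 2 ^ (p - 1) * (X + Y) := by
      rw [Real.rpow_sub two_pos, Real.rpow_one]; ring
    rw [e5] at hb
    have h2p1 : (0:ℝ) ≤ 2 ^ (p - 1) := le_of_lt (Real.rpow_pos_of_pos two_pos _)
    have e6 : (2 ^ (p - 1) * (X + Y)) ^ (2 / p)
        = (2:ℝ) ^ ((p - 1) * (2 / p)) * (X + Y) ^ (2 / p) := by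
      rw [Real.mul_rpow h2p1 (by linarith), ← Real.rpow_mul (by norm_num)]
    have h2divp : (1:ℝ) ≤ 2 / p := by
      rw [le_div_iff₀ hp0]; linarith
    have e7 : (X + Y) ^ (2 / p) ≤ 2 ^ (2 / p - 1) * (X ^ (2 / p) + Y ^ (2 / p)) :=
      rpow_add_le hX0 hY0 h2divp
    have e8 : X ^ (2 / p) = ‖f‖ ^ (2:ℝ) := by
      rw [hX, ← Real.rpow_mul (norm_nonneg f)]
      congr 1
      field_simp
    have e9 : Y ^ (2 / p) = ‖g‖ ^ (2:ℝ) := by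
      rw [hY, ← Real.rpow_mul (norm_nonneg g)]
      congr 1
      field_simp
    have e10 : (2:ℝ) ^ ((p - 1) * (2 / p)) * 2 ^ (2 / p - 1) = 2 := by
      rw [← Real.rpow_add two_pos, show (p - 1) * (2 / p) + (2 / p - 1) = 1 by
        field_simp; ring, Real.rpow_one]
    have e11 : (2:ℝ) ^ ((2:ℝ) - 1) = 2 := by
      norm_num
    rw [e11]
    calc ‖f + g‖ ^ (2:ℝ) + (p - 1) * ‖f - g‖ ^ (2:ℝ)
        ≤ (2 ^ (p - 1) * (X + Y)) ^ (2 / p) := hb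
      _ = (2:ℝ) ^ ((p - 1) * (2 / p)) * (X + Y) ^ (2 / p) := e6
      _ ≤ (2:ℝ) ^ ((p - 1) * (2 / p)) * (2 ^ (2 / p - 1) * (X ^ (2 / p) + Y ^ (2 / p))) := by
          apply mul_le_mul_of_nonneg_left e7 (le_of_lt (Real.rpow_pos_of_pos two_pos _))
      _ = 2 * (‖f‖ ^ (2:ℝ) + ‖g‖ ^ (2:ℝ)) := by
          rw [e8, e9, ← mul_assoc, e10]

end LpNorm
end BP5

open MeasureTheory

/-- **Martingale-type inequality for finite systems of vectors in `L^p` (after Bourgain/Pisier).**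
For `1 < p < ∞` and `q = max{p,2}`, there is a constant `C` depending only on `p` such that
for every `r ≥ 1`, with `J = 2^r`, every measure space `(X,μ)` and all vectors
`x_0, …, x_J ∈ L^p(X,μ)`:
`Σ_{s=1}^{r-1} 2^{-qs} · min_{2^s ≤ j ≤ J-2^s} ‖2x_j - x_{j-2^s} - x_{j+2^s}‖^q
  ≤ C · max_{0 ≤ j ≤ J-1} ‖x_{j+1} - x_j‖^q`
(here `2x_j - x_{j-2^s} - x_{j+2^s}` is written `(x_j - x_{j-2^s}) + (x_j - x_{j+2^s})`). -/
theorem stmt_5 (p : ℝ) (hp₁ : 1 < p) :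
    ∃ C : ℝ, 0 < C ∧
      ∀ (r : ℕ), 1 ≤ r →
      ∀ (X : Type) (mX : MeasurableSpace X) (μ : Measure X)
        (x : ℕ → Lp ℝ (ENNReal.ofReal p) μ),
        ∑ s ∈ Finset.Icc 1 (r - 1),
          (2 : ℝ) ^ (-(max p 2 * (s : ℝ))) *
            sInf {v : ℝ | ∃ j : ℕ, 2 ^ s ≤ j ∧ j ≤ 2 ^ r - 2 ^ s ∧
              v = ‖(x j - x (j - 2 ^ s)) + (x j - x (j + 2 ^ s))‖ ^ (max p 2)}
          ≤ C * sSup {v : ℝ | ∃ j : ℕ, j ≤ 2 ^ r - 1 ∧ v = ‖x (j + 1) - x j‖ ^ (max p 2)} := by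
  set q := max p 2 with hqdef
  have hq2 : (2:ℝ) ≤ q := le_max_right _ _
  have hq0 : (0:ℝ) < q := by linarith
  set c := min 1 (p - 1) with hcdef
  have hc0 : (0:ℝ) < c := lt_min one_pos (by linarith)
  have hc1 : c ≤ 1 := min_le_left _ _
  refine ⟨2 ^ q / c, by positivity, ?_⟩
  intro r hr X mX μ x
  haveI : Fact (1 ≤ ENNReal.ofReal p) := ⟨ENNReal.one_le_ofReal.2 hp₁.le⟩
  have h2r1 : 1 ≤ 2 ^ r := Nat.one_le_two_pow
  have h2r2 : 2 ≤ 2 ^ r := by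
    have := Nat.pow_le_pow_right (show 1 ≤ 2 by norm_num) hr
    simpa using this
  -- the maximal increments at scale 2^s
  set A : ℕ → ℝ := fun s => (Finset.range (2 ^ r - 2 ^ s + 1)).sup'
      (Finset.nonempty_range_iff.mpr (Nat.succ_ne_zero _))
      (fun j => ‖x (j + 2 ^ s) - x j‖) with hAdef
  have hA0 : ∀ s, 0 ≤ A s := by
    intro s
    exact le_trans (norm_nonneg (x (0 + 2 ^ s) - x 0))
      (Finset.le_sup' (fun j => ‖x (j + 2 ^ s) - x j‖)
        (Finset.mem_range.mpr (Nat.succ_pos _) : (0:ℕ) ∈ _))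
  have hAle : ∀ s j, j + 2 ^ s ≤ 2 ^ r → ‖x (j + 2 ^ s) - x j‖ ≤ A s := by
    intro s j hj
    exact Finset.le_sup' (fun j => ‖x (j + 2 ^ s) - x j‖)
      (Finset.mem_range.mpr (show j < 2 ^ r - 2 ^ s + 1 by omega))
  have hAex : ∀ s, 2 ^ s ≤ 2 ^ r →
      ∃ j, j + 2 ^ s ≤ 2 ^ r ∧ A s = ‖x (j + 2 ^ s) - x j‖ := by
    intro s hs
    obtain ⟨j, hjmem, hjeq⟩ := Finset.exists_mem_eq_sup'
      (Finset.nonempty_range_iff.mpr (Nat.succ_ne_zero (2 ^ r - 2 ^ s)))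
      (fun j => ‖x (j + 2 ^ s) - x j‖)
    rw [Finset.mem_range] at hjmem
    exact ⟨j, by omega, hjeq⟩
  set B : ℕ → ℝ := fun s => 2 ^ (-(q * (s:ℝ))) * A s ^ q with hBdef
  have hB0 : ∀ s, 0 ≤ B s := fun s =>
    mul_nonneg (Real.rpow_pos_of_pos two_pos _).le (Real.rpow_nonneg (hA0 s) q)
  -- max increment at scale 1
  set m : ℝ := (Finset.range (2 ^ r)).sup' (Finset.nonempty_range_iff.mpr (by omega))
      (fun j => ‖x (j + 1) - x j‖) with hmdef
  have hm0 : 0 ≤ m :=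
    le_trans (norm_nonneg (x (0 + 1) - x 0))
      (Finset.le_sup' (fun j => ‖x (j + 1) - x j‖)
        (Finset.mem_range.mpr (by omega) : (0:ℕ) ∈ _))
  have hmle : ∀ j, j < 2 ^ r → ‖x (j + 1) - x j‖ ≤ m := by
    intro j hj
    exact Finset.le_sup' (fun j => ‖x (j + 1) - x j‖) (Finset.mem_range.mpr hj)
  -- the per-scale estimate
  have claim : ∀ s ∈ Finset.Icc 1 (r - 1),
      (2 : ℝ) ^ (-(q * (s : ℝ))) *
        sInf {v : ℝ | ∃ j : ℕ, 2 ^ s ≤ j ∧ j ≤ 2 ^ r - 2 ^ s ∧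
          v = ‖(x j - x (j - 2 ^ s)) + (x j - x (j + 2 ^ s))‖ ^ q}
      ≤ 2 ^ q / c * (B s - B (s + 1)) := by
    intro s hs
    rw [Finset.mem_Icc] at hs
    have hs1 : 1 ≤ s := hs.1
    have hsr : s + 1 ≤ r := by omega
    have h2s1 : 2 ^ (s + 1) ≤ 2 ^ r := Nat.pow_le_pow_right (by norm_num) hsr
    have hpows : 2 ^ (s + 1) = 2 * 2 ^ s := by rw [pow_succ]; ring
    obtain ⟨j', hj'le, hj'eq⟩ := hAex (s + 1) h2s1
    set j := j' + 2 ^ s with hjdef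
    have hjlo : 2 ^ s ≤ j := by omega
    have hjhi : j ≤ 2 ^ r - 2 ^ s := by omega
    have hidx1 : j - 2 ^ s = j' := by omega
    have hidx2 : j + 2 ^ s = j' + 2 ^ (s + 1) := by omega
    set a := x (j + 2 ^ s) - x j with hadef
    set b := x j - x (j - 2 ^ s) with hbdef
    have hkey := BP5.key_ineq hp₁ a b
    rw [← hqdef, ← hcdef] at hkey
    -- identify a + b
    have hab : a + b = x (j' + 2 ^ (s + 1)) - x j' := by
      rw [hadef, hbdef, hidx1, hidx2]; abel
    have hnab : ‖a + b‖ = A (s + 1) := by rw [hab, hj'eq]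
    -- identify a - b with the expression in the set
    set expr := (x j - x (j - 2 ^ s)) + (x j - x (j + 2 ^ s)) with hexprdef
    have hamb : a - b = -expr := by rw [hadef, hbdef, hexprdef]; abel
    have hnamb : ‖a - b‖ = ‖expr‖ := by rw [hamb, norm_neg]
    -- bounds on ‖a‖, ‖b‖
    have hna : ‖a‖ ≤ A s := hAle s j (by omega)
    have hnb : ‖b‖ ≤ A s := by
      have := hAle s j' (by omega)
      rw [hbdef, hidx1, hjdef]
      exact this
    have hnaq : ‖a‖ ^ q ≤ A s ^ q := Real.rpow_le_rpow (norm_nonneg a) hna hq0.le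
    have hnbq : ‖b‖ ^ q ≤ A s ^ q := Real.rpow_le_rpow (norm_nonneg b) hnb hq0.le
    rw [hnab, hnamb] at hkey
    have h2q : (2:ℝ) ^ (q - 1) * (A s ^ q + A s ^ q) = 2 ^ q * A s ^ q := by
      rw [Real.rpow_sub two_pos, Real.rpow_one]; ring
    have hkey2 : c * ‖expr‖ ^ q ≤ 2 ^ q * A s ^ q - A (s + 1) ^ q := by
      have h1 : (2:ℝ) ^ (q-1) * (‖a‖ ^ q + ‖b‖ ^ q) ≤ 2 ^ q * A s ^ q := by
        rw [← h2q]
        apply mul_le_mul_of_nonneg_left (add_le_add hnaq hnbq)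
          (Real.rpow_pos_of_pos two_pos _).le
      linarith
    -- sInf bound
    set S := {v : ℝ | ∃ j : ℕ, 2 ^ s ≤ j ∧ j ≤ 2 ^ r - 2 ^ s ∧
        v = ‖(x j - x (j - 2 ^ s)) + (x j - x (j + 2 ^ s))‖ ^ q} with hSdef
    have hSmem : ‖expr‖ ^ q ∈ S := ⟨j, hjlo, hjhi, rfl⟩
    have hSbdd : BddBelow S := by
      refine ⟨0, ?_⟩
      rintro v ⟨j₁, -, -, rfl⟩
      exact Real.rpow_nonneg (norm_nonneg _) q
    have hSinf : sInf S ≤ ‖expr‖ ^ q := csInf_le hSbdd hSmem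
    have hcinf : c * sInf S ≤ 2 ^ q * A s ^ q - A (s + 1) ^ q := by
      calc c * sInf S ≤ c * ‖expr‖ ^ q := by
            apply mul_le_mul_of_nonneg_left hSinf hc0.le
        _ ≤ _ := hkey2
    -- rearrange into telescoping form
    have hpos : (0:ℝ) < 2 ^ (-(q * (s:ℝ))) := Real.rpow_pos_of_pos two_pos _
    have hexpand : 2 ^ q / c * (B s - B (s + 1))
        = 2 ^ (-(q * (s:ℝ))) / c * (2 ^ q * A s ^ q - A (s + 1) ^ q) := by
      have hcast : ((s + 1 : ℕ) : ℝ) = (s:ℝ) + 1 := by push_cast; ring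
      have hmul : (2:ℝ) ^ q * 2 ^ (-(q * ((s:ℝ) + 1))) = 2 ^ (-(q * (s:ℝ))) := by
        rw [← Real.rpow_add two_pos]; congr 1; ring
      have hUV : (2:ℝ) ^ q * (2 ^ (-(q * (s:ℝ))) * A s ^ q
            - 2 ^ (-(q * ((s:ℝ) + 1))) * A (s + 1) ^ q)
          = 2 ^ (-(q * (s:ℝ))) * (2 ^ q * A s ^ q - A (s + 1) ^ q) := by
        linear_combination (-(A (s + 1) ^ q)) * hmul
      simp only [hBdef, hcast]
      rw [div_mul_eq_mul_div, hUV, ← div_mul_eq_mul_div]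
    rw [hexpand]
    calc (2:ℝ) ^ (-(q * (s:ℝ))) * sInf S
        = 2 ^ (-(q * (s:ℝ))) / c * (c * sInf S) := by field_simp
      _ ≤ 2 ^ (-(q * (s:ℝ))) / c * (2 ^ q * A s ^ q - A (s + 1) ^ q) := by
          apply mul_le_mul_of_nonneg_left hcinf (by positivity)
  -- telescoping
  have htel : ∑ s ∈ Finset.Icc 1 (r - 1), (B s - B (s + 1)) = B 1 - B r := by
    have h1 : Finset.Icc 1 (r - 1) = Finset.Ico 1 r := by
      rw [← Finset.Ico_add_one_right_eq_Icc, show r - 1 + 1 = r by omega]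
    rw [h1, Finset.sum_Ico_eq_sum_range]
    simp only [show ∀ i:ℕ, 1 + i + 1 = 1 + (i + 1) from fun i => by omega]
    rw [Finset.sum_range_sub' (fun i => B (1 + i)) (r - 1)]
    norm_num [show 1 + (r - 1) = r by omega]
  -- bound B 1 by m ^ q
  have hA1 : A 1 ≤ 2 * m := by
    apply Finset.sup'_le
    intro j hj
    rw [Finset.mem_range] at hj
    have e : x (j + 2 ^ 1) - x j = (x (j + 2) - x (j + 1)) + (x (j + 1) - x j) := by
      rw [show j + 2 ^ 1 = j + 2 by norm_num]; abel
    rw [e]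
    have t1 : ‖x (j + 2) - x (j + 1)‖ ≤ m := by
      have := hmle (j + 1) (by omega)
      rwa [show j + 1 + 1 = j + 2 by omega] at this
    have t2 : ‖x (j + 1) - x j‖ ≤ m := hmle j (by omega)
    calc ‖(x (j + 2) - x (j + 1)) + (x (j + 1) - x j)‖
        ≤ ‖x (j + 2) - x (j + 1)‖ + ‖x (j + 1) - x j‖ := norm_add_le _ _
      _ ≤ 2 * m := by linarith
  have hB1 : B 1 ≤ m ^ q := by
    have h1 : A 1 ^ q ≤ (2 * m) ^ q := Real.rpow_le_rpow (hA0 1) hA1 hq0.le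
    have h2 : ((2:ℝ) * m) ^ q = 2 ^ q * m ^ q := Real.mul_rpow (by norm_num) hm0
    have h3 : (2:ℝ) ^ (-(q * ((1:ℕ):ℝ))) * 2 ^ q = 1 := by
      rw [← Real.rpow_add two_pos]
      norm_num
    calc B 1 = 2 ^ (-(q * ((1:ℕ):ℝ))) * A 1 ^ q := rfl
      _ ≤ 2 ^ (-(q * ((1:ℕ):ℝ))) * (2 ^ q * m ^ q) := by
          rw [← h2]
          exact mul_le_mul_of_nonneg_left h1 (Real.rpow_pos_of_pos two_pos _).le
      _ = (2 ^ (-(q * ((1:ℕ):ℝ))) * 2 ^ q) * m ^ q := by ring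
      _ = m ^ q := by rw [h3, one_mul]
  -- bound m ^ q by sSup of the right set
  set T := {v : ℝ | ∃ j : ℕ, j ≤ 2 ^ r - 1 ∧ v = ‖x (j + 1) - x j‖ ^ q} with hTdef
  have hTbdd : BddAbove T := by
    apply BddAbove.mono (show T ⊆ (fun j => ‖x (j + 1) - x j‖ ^ q) '' (Set.Iic (2 ^ r - 1)) by
      rintro v ⟨j₁, hj₁, rfl⟩
      exact ⟨j₁, hj₁, rfl⟩)
    exact ((Set.finite_Iic _).image _).bddAbove
  have hmT : m ^ q ≤ sSup T := by
    obtain ⟨j₀, hj₀mem, hj₀eq⟩ := Finset.exists_mem_eq_sup'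
      (Finset.nonempty_range_iff.mpr (by omega : 2 ^ r ≠ 0)) (fun j => ‖x (j + 1) - x j‖)
    rw [Finset.mem_range] at hj₀mem
    have : m ^ q ∈ T := ⟨j₀, by omega, by rw [hmdef, hj₀eq]⟩
    exact le_csSup hTbdd this
  -- put it all together
  calc ∑ s ∈ Finset.Icc 1 (r - 1),
        (2 : ℝ) ^ (-(q * (s : ℝ))) *
          sInf {v : ℝ | ∃ j : ℕ, 2 ^ s ≤ j ∧ j ≤ 2 ^ r - 2 ^ s ∧
            v = ‖(x j - x (j - 2 ^ s)) + (x j - x (j + 2 ^ s))‖ ^ q}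
      ≤ ∑ s ∈ Finset.Icc 1 (r - 1), 2 ^ q / c * (B s - B (s + 1)) :=
        Finset.sum_le_sum claim
    _ = 2 ^ q / c * (B 1 - B r) := by rw [← Finset.mul_sum, htel]
    _ ≤ 2 ^ q / c * B 1 := by
        apply mul_le_mul_of_nonneg_left _ (by positivity)
        linarith [hB0 r]
    _ ≤ 2 ^ q / c * (m ^ q) := by
        apply mul_le_mul_of_nonneg_left hB1 (by positivity)
    _ ≤ 2 ^ q / c * sSup T := by
        apply mul_le_mul_of_nonneg_left hmT (by positivity)
end

section
/- For every increasing function h : [1,∞) → [0,∞) that is sublinear (i.e. h(t)/t → 0 as t → ∞) and every 1 ≤ p < ∞, there exist a nondecreasing function f : [1,∞) → [0,∞) satisfying condition (C_p), a constant c > 0, and a strictly increasing sequence of positive integers (n_i)_{i∈ℕ} such that f(n_i) ≥ c·h(n_i) for every i ∈ ℕ. -/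
open Set MeasureTheory Filter

/-- Auxiliary: a strictly increasing sequence dominating a given sequence of thresholds. -/
def stmt6AuxSeq (g : ℕ → ℕ) : ℕ → ℕ
  | 0 => max 2 (g 0)
  | (i + 1) => max (stmt6AuxSeq g i + 1) (g (i + 1))

/-- **Proposition (lacunar compression functions).**
For any increasing sublinear function `h : [1,∞) → [0,∞)` and every `1 ≤ p < ∞`, there exist
a nondecreasing function `f : [1,∞) → [0,∞)` satisfying condition `(C_p)`
(i.e. `∫_1^∞ (f t / t)^p dt/t < ∞`), a constant `c > 0`, and a strictly increasing sequence of
positive integers `(n_i)` such that `f (n_i) ≥ c * h (n_i)` for every `i`. -/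
theorem stmt_6 (h : ℝ → ℝ) (hmono : StrictMonoOn h (Set.Ici (1 : ℝ)))
    (hnonneg : ∀ t : ℝ, 1 ≤ t → 0 ≤ h t)
    (hsublinear : Filter.Tendsto (fun t : ℝ => h t / t) Filter.atTop (nhds 0))
    (p : ℝ) (hp : 1 ≤ p) :
    ∃ f : ℝ → ℝ, MonotoneOn f (Set.Ici (1 : ℝ)) ∧ (∀ t : ℝ, 1 ≤ t → 0 ≤ f t) ∧
      MeasureTheory.IntegrableOn (fun t : ℝ => (f t / t) ^ p / t) (Set.Ioi (1 : ℝ)) ∧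
      ∃ c : ℝ, 0 < c ∧ ∃ n : ℕ → ℕ, StrictMono n ∧ (∀ i : ℕ, 0 < n i) ∧
        ∀ i : ℕ, c * h (n i) ≤ f (n i) := by
  classical
  have hm := hmono.monotoneOn
  -- Step 1: thresholds for sublinearity
  have key : ∀ i : ℕ, ∃ N : ℕ, ∀ s : ℝ, (N : ℝ) ≤ s → h s / s ≤ (1 / 2 : ℝ) ^ i := by
    intro i
    have hpos : (0 : ℝ) < (1 / 2 : ℝ) ^ i := by positivity
    have hev : ∀ᶠ s in atTop, h s / s < (1 / 2 : ℝ) ^ i :=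
      hsublinear.eventually_lt_const hpos
    rcases eventually_atTop.mp hev with ⟨N0, hN0⟩
    refine ⟨⌈N0⌉₊, fun s hs => ?_⟩
    exact (hN0 s ((Nat.le_ceil N0).trans hs)).le
  choose Nf hNf using key
  -- Step 2: the lacunary sequence
  set n : ℕ → ℕ := stmt6AuxSeq Nf with hndef
  have hn0 : n 0 = max 2 (Nf 0) := rfl
  have hnsucc : ∀ i, n (i + 1) = max (n i + 1) (Nf (i + 1)) := fun i => rfl
  have hnstrict : StrictMono n := by
    apply strictMono_nat_of_lt_succ
    intro i
    rw [hnsucc i]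
    exact lt_of_lt_of_le (Nat.lt_succ_self _) (le_max_left _ _)
  have hn2 : ∀ i, 2 ≤ n i := by
    intro i
    induction i with
    | zero => exact le_max_left _ _
    | succ k ih =>
      rw [hnsucc k]
      exact le_trans ih (le_trans (Nat.le_succ _) (le_max_left _ _))
  have hNle : ∀ i, Nf i ≤ n i := by
    intro i
    cases i with
    | zero => exact le_max_right _ _
    | succ k => exact le_max_right _ _
  have thresh : ∀ i : ℕ, ∀ s : ℝ, (n i : ℝ) ≤ s → h s / s ≤ (1 / 2 : ℝ) ^ i := by
    intro i s hs
    have hc : (Nf i : ℝ) ≤ (n i : ℝ) := by exact_mod_cast hNle i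
    exact hNf i s (hc.trans hs)
  have hnpos : ∀ i : ℕ, (0 : ℝ) < (n i : ℝ) := fun i => by
    have := hn2 i; positivity
  have hn1 : ∀ i : ℕ, (1 : ℝ) ≤ (n i : ℝ) := fun i => by
    have := hn2 i; exact_mod_cast le_trans one_le_two this
  have hhn : ∀ i : ℕ, h (n i) ≤ (1 / 2 : ℝ) ^ i * (n i : ℝ) := by
    intro i
    have := thresh i (n i) le_rfl
    rw [div_le_iff₀ (hnpos i)] at this
    linarith [this]
  -- Step 3: the step function f
  set K : ℝ → ℕ := fun t => Nat.findGreatest (fun i => (n i : ℝ) ≤ t) ⌊t⌋₊ with hK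
  set f : ℝ → ℝ := fun t => if (n 0 : ℝ) ≤ t then h (n (K t)) else 0 with hf
  have hile : ∀ i : ℕ, (i : ℝ) ≤ (n i : ℝ) := by
    intro i
    have : i ≤ n i := hnstrict.le_apply.trans le_rfl
    exact_mod_cast this
  have hKle : ∀ t : ℝ, (n 0 : ℝ) ≤ t → (n (K t) : ℝ) ≤ t := by
    intro t ht
    exact Nat.findGreatest_spec (P := fun i => (n i : ℝ) ≤ t) (m := 0) (Nat.zero_le _) ht
  have hKge : ∀ (i : ℕ) (t : ℝ), (n i : ℝ) ≤ t → i ≤ K t := by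
    intro i t ht
    exact Nat.le_findGreatest (P := fun i => (n i : ℝ) ≤ t) (Nat.le_floor ((hile i).trans ht)) ht
  have hKlt : ∀ (i : ℕ) (t : ℝ), (n 0 : ℝ) ≤ t → t < (n (i + 1) : ℝ) → K t ≤ i := by
    intro i t h0 hlt
    by_contra hc
    push_neg at hc
    have h1 : n (i + 1) ≤ n (K t) := hnstrict.monotone hc
    have h2 : (n (K t) : ℝ) ≤ t := hKle t h0
    have : (n (i + 1) : ℝ) ≤ t := le_trans (by exact_mod_cast h1) h2
    linarith
  -- f is monotone on all of ℝ
  have hfmono : Monotone f := by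
    intro a b hab
    simp only [hf]
    by_cases ha : (n 0 : ℝ) ≤ a
    · have hb : (n 0 : ℝ) ≤ b := ha.trans hab
      rw [if_pos ha, if_pos hb]
      have hKab : K a ≤ K b := by
        have hfl : K a ≤ ⌊b⌋₊ :=
          Nat.le_floor (le_trans (le_trans (hile (K a)) (hKle a ha)) hab)
        exact Nat.le_findGreatest (P := fun i => (n i : ℝ) ≤ b) hfl ((hKle a ha).trans hab)
      exact hm (hn1 (K a)) (hn1 (K b)) (by exact_mod_cast hnstrict.monotone hKab)
    · rw [if_neg ha]
      by_cases hb : (n 0 : ℝ) ≤ b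
      · rw [if_pos hb]; exact hnonneg _ (hn1 _)
      · rw [if_neg hb]
  have hfnonneg : ∀ t : ℝ, 0 ≤ f t := by
    intro t
    simp only [hf]
    split_ifs with ht
    · exact hnonneg _ (hn1 _)
    · rfl
  have hfmeas : Measurable f := hfmono.measurable
  -- value of f on [n 0, ∞)
  have hfval : ∀ t : ℝ, (n 0 : ℝ) ≤ t → f t = h (n (K t)) := by
    intro t ht; simp only [hf]; rw [if_pos ht]
  -- f t ≤ t for t ≥ 1
  have hfle : ∀ t : ℝ, 1 ≤ t → f t ≤ t := by
    intro t ht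
    by_cases h0 : (n 0 : ℝ) ≤ t
    · rw [hfval t h0]
      have h1 : h (n (K t)) ≤ (1 / 2 : ℝ) ^ (K t) * (n (K t) : ℝ) := hhn (K t)
      have h2 : ((1 / 2 : ℝ)) ^ (K t) ≤ 1 := pow_le_one₀ (by norm_num) (by norm_num)
      have h3 : (n (K t) : ℝ) ≤ t := hKle t h0
      nlinarith [hnpos (K t)]
    · simp only [hf]; rw [if_neg h0]; linarith
  -- f t ≤ h (n i) on [n i, n (i+1))
  have hfstep : ∀ (i : ℕ) (t : ℝ), (n i : ℝ) ≤ t → t < (n (i + 1) : ℝ) → f t ≤ h (n i) := by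
    intro i t hti htl
    have h0 : (n 0 : ℝ) ≤ t := le_trans (by exact_mod_cast hnstrict.monotone (Nat.zero_le i)) hti
    rw [hfval t h0]
    exact hm (hn1 _) (hn1 _) (by exact_mod_cast hnstrict.monotone (hKlt i t h0 htl))
  -- f vanishes below n 0
  have hfzero : ∀ t : ℝ, t < (n 0 : ℝ) → f t = 0 := by
    intro t ht; simp only [hf]; rw [if_neg (not_le.mpr ht)]
  -- the dominating function G
  set G : ℝ → ℝ := fun t => f t / t ^ 2 with hG
  have hGmeas : Measurable G := hfmeas.div ((measurable_id.pow_const 2))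
  have hGnonneg : ∀ t : ℝ, 0 < t → 0 ≤ G t := by
    intro t ht; exact div_nonneg (hfnonneg t) (by positivity)
  -- integrability of G on bounded pieces
  have hGint : ∀ I : ℕ, IntegrableOn G (Ioc (1 : ℝ) (n I)) := by
    intro I
    have hconst : IntegrableOn (fun _ : ℝ => f ((n I : ℝ))) (Ioc (1 : ℝ) (n I)) :=
      integrableOn_const measure_Ioc_lt_top.ne
    refine Integrable.mono' hconst (hGmeas.aestronglyMeasurable) ?_
    filter_upwards [ae_restrict_mem measurableSet_Ioc] with t ht
    have ht1 : (1 : ℝ) < t := ht.1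
    have h1 : (1 : ℝ) ≤ t ^ 2 := by nlinarith
    have h2 : G t ≤ f t := by
      rw [hG]
      calc f t / t ^ 2 ≤ f t / 1 := by
            apply div_le_div_of_nonneg_left (hfnonneg t) one_pos h1
          _ = f t := div_one _
    rw [Real.norm_of_nonneg (hGnonneg t (by linarith))]
    exact h2.trans (hfmono ht.2)
  -- the uniform bound on interval integrals
  have hbound : ∀ I : ℕ, ∫ t in Ioc (1 : ℝ) (n I), G t ≤ 2 - 2 * (1 / 2 : ℝ) ^ I := by
    intro I
    induction I with
    | zero =>
      have : ∫ t in Ioc (1 : ℝ) (n 0), G t = ∫ t in Ioo (1 : ℝ) (n 0), G t :=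
        integral_Ioc_eq_integral_Ioo
      rw [this]
      have hz : ∀ t ∈ Ioo (1 : ℝ) (n 0), G t = 0 := by
        intro t ht
        rw [hG]
        simp only
        rw [hfzero t ht.2, zero_div]
      rw [setIntegral_congr_fun measurableSet_Ioo hz]
      simp
    | succ I ih =>
      have hle : (1 : ℝ) ≤ (n I : ℝ) := hn1 I
      have hlee : (n I : ℝ) ≤ (n (I + 1) : ℝ) := by
        exact_mod_cast (hnstrict (Nat.lt_succ_self I)).le
      have hunion : Ioc (1 : ℝ) (n I) ∪ Ioc ((n I : ℝ)) (n (I + 1)) = Ioc (1 : ℝ) (n (I + 1)) :=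
        Ioc_union_Ioc_eq_Ioc hle hlee
      have hdisj : Disjoint (Ioc (1 : ℝ) (n I)) (Ioc ((n I : ℝ)) (n (I + 1))) :=
        Ioc_disjoint_Ioc_of_le le_rfl
      have hint1 : IntegrableOn G (Ioc (1 : ℝ) (n I)) := hGint I
      have hint2 : IntegrableOn G (Ioc ((n I : ℝ)) (n (I + 1))) :=
        (hGint (I + 1)).mono_set (Ioc_subset_Ioc_left hle)
      have hsplit : ∫ t in Ioc (1 : ℝ) (n (I + 1)), G t =
          (∫ t in Ioc (1 : ℝ) (n I), G t) + ∫ t in Ioc ((n I : ℝ)) (n (I + 1)), G t := by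
        rw [← hunion]
        exact setIntegral_union hdisj measurableSet_Ioc hint1 hint2
      -- bound the second piece
      have hB : IntegrableOn (fun t : ℝ => ((1 / 2 : ℝ) ^ I * (n I : ℝ)) * t ^ (-2 : ℝ))
          (Ioi ((n I : ℝ))) := by
        exact (integrableOn_Ioi_rpow_of_lt (by norm_num) (hnpos I)).const_mul _
      have hBval : ∫ t in Ioi ((n I : ℝ)), ((1 / 2 : ℝ) ^ I * (n I : ℝ)) * t ^ (-2 : ℝ) =
          (1 / 2 : ℝ) ^ I := by
        rw [integral_const_mul, integral_Ioi_rpow_of_lt (by norm_num) (hnpos I)]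
        have h2 : (n I : ℝ) ^ ((-2 : ℝ) + 1) = ((n I : ℝ))⁻¹ := by
          norm_num
          exact Real.rpow_neg_one _
        rw [h2]
        field_simp
        ring
      have hp2 : ∫ t in Ioc ((n I : ℝ)) (n (I + 1)), G t ≤ (1 / 2 : ℝ) ^ I := by
        rw [integral_Ioc_eq_integral_Ioo]
        have hGB : ∀ t ∈ Ioo ((n I : ℝ)) (n (I + 1)), G t ≤
            ((1 / 2 : ℝ) ^ I * (n I : ℝ)) * t ^ (-2 : ℝ) := by
          intro t ht
          have htpos : (0 : ℝ) < t := lt_of_lt_of_le (hnpos I) ht.1.le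
          have hft : f t ≤ h (n I) := hfstep I t ht.1.le ht.2
          have hrw : t ^ (-2 : ℝ) = (t ^ 2)⁻¹ := by
            rw [← Real.rpow_natCast t 2, ← Real.rpow_neg htpos.le]
            norm_num
          rw [hG, hrw]
          simp only
          rw [div_eq_mul_inv]
          have hsq : (0 : ℝ) < (t ^ 2)⁻¹ := by positivity
          have : f t ≤ (1 / 2 : ℝ) ^ I * (n I : ℝ) := hft.trans (hhn I)
          nlinarith
        have hintB : IntegrableOn (fun t : ℝ => ((1 / 2 : ℝ) ^ I * (n I : ℝ)) * t ^ (-2 : ℝ))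
            (Ioo ((n I : ℝ)) (n (I + 1))) := hB.mono_set Ioo_subset_Ioi_self
        have hintG : IntegrableOn G (Ioo ((n I : ℝ)) (n (I + 1))) :=
          hint2.mono_set Ioo_subset_Ioc_self
        calc ∫ t in Ioo ((n I : ℝ)) (n (I + 1)), G t
            ≤ ∫ t in Ioo ((n I : ℝ)) (n (I + 1)),
                ((1 / 2 : ℝ) ^ I * (n I : ℝ)) * t ^ (-2 : ℝ) :=
              setIntegral_mono_on hintG hintB measurableSet_Ioo hGB
          _ ≤ ∫ t in Ioi ((n I : ℝ)), ((1 / 2 : ℝ) ^ I * (n I : ℝ)) * t ^ (-2 : ℝ) := by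
              refine setIntegral_mono_set hB ?_ (Filter.Eventually.of_forall Ioo_subset_Ioi_self)
              filter_upwards [ae_restrict_mem measurableSet_Ioi] with t ht
              have htpos : (0 : ℝ) < t := lt_of_le_of_lt (hnpos I).le ht
              positivity
          _ = (1 / 2 : ℝ) ^ I := hBval
      rw [hsplit]
      have : (2 : ℝ) - 2 * (1 / 2 : ℝ) ^ I + (1 / 2 : ℝ) ^ I = 2 - 2 * (1 / 2 : ℝ) ^ (I + 1) := by
        ring
      linarith
  -- G is integrable on (1, ∞)
  have hGInt : IntegrableOn G (Ioi (1 : ℝ)) := by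
    refine integrableOn_Ioi_of_intervalIntegral_norm_bounded (f := G) (b := fun I => ((n I : ℝ)))
      (l := atTop) 2 1 (fun I => hGint I) ?_ ?_
    · exact tendsto_natCast_atTop_atTop.comp hnstrict.tendsto_atTop
    · refine Filter.Eventually.of_forall fun I => ?_
      rw [intervalIntegral.integral_of_le (hn1 I)]
      have : ∫ t in Ioc (1 : ℝ) (n I), ‖G t‖ = ∫ t in Ioc (1 : ℝ) (n I), G t := by
        refine setIntegral_congr_fun measurableSet_Ioc fun t ht => ?_
        exact Real.norm_of_nonneg (hGnonneg t (by linarith [ht.1]))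
      rw [this]
      have h2 : (0 : ℝ) ≤ 2 * (1 / 2 : ℝ) ^ I := by positivity
      linarith [hbound I]
  -- the actual integrand is dominated by G
  have hgmeas : Measurable (fun t : ℝ => (f t / t) ^ p / t) := by
    have hc : Continuous (fun x : ℝ => x ^ p) :=
      Real.continuous_rpow_const (le_trans zero_le_one hp)
    exact ((hc.measurable.comp (hfmeas.div measurable_id)).div measurable_id)
  have hgint : IntegrableOn (fun t : ℝ => (f t / t) ^ p / t) (Ioi (1 : ℝ)) := by
    refine Integrable.mono' hGInt hgmeas.aestronglyMeasurable ?_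
    filter_upwards [ae_restrict_mem measurableSet_Ioi] with t ht
    have ht1 : (1 : ℝ) < t := ht
    have htpos : (0 : ℝ) < t := by linarith
    have hx0 : 0 ≤ f t / t := div_nonneg (hfnonneg t) htpos.le
    have hx1 : f t / t ≤ 1 := by
      rw [div_le_one htpos]
      exact hfle t ht1.le
    have hple : (f t / t) ^ p ≤ f t / t := by
      rcases eq_or_lt_of_le hx0 with h0 | h0
      · rw [← h0, Real.zero_rpow (by linarith : p ≠ 0)]
      · calc (f t / t) ^ p ≤ (f t / t) ^ (1 : ℝ) :=
              Real.rpow_le_rpow_of_exponent_ge h0 hx1 hp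
          _ = f t / t := Real.rpow_one _
    have hnn : 0 ≤ (f t / t) ^ p / t := div_nonneg (Real.rpow_nonneg hx0 p) htpos.le
    rw [Real.norm_of_nonneg hnn]
    have : (f t / t) ^ p / t ≤ (f t / t) / t :=
      div_le_div_of_nonneg_right hple htpos.le
    calc (f t / t) ^ p / t ≤ (f t / t) / t := this
      _ = f t / t ^ 2 := by rw [div_div, sq]
      _ = G t := rfl
  -- assemble
  refine ⟨f, hfmono.monotoneOn _, fun t _ => hfnonneg t, hgint, 1, one_pos, n, hnstrict,
    fun i => lt_of_lt_of_le two_pos (hn2 i), fun i => ?_⟩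
  rw [one_mul]
  have h0 : (n 0 : ℝ) ≤ (n i : ℝ) := by exact_mod_cast hnstrict.monotone (Nat.zero_le i)
  rw [hfval _ h0]
  have hKi : i ≤ K ((n i : ℝ)) := hKge i _ le_rfl
  exact hm (hn1 i) (hn1 _) (by exact_mod_cast hnstrict.monotone hKi)
end

section
/- Let G be an infinite group generated by a finite symmetric set S with 1 ∈ S, and let 2 ≤ p < ∞. Set V(n) = |S^n| (the cardinality of the ball of radius n). Then there exists c > 0 such that for every integer n ≥ 2 there is a nonzero finitely supported function φ : G → ℝ with supp φ ⊆ B(1,n) and ‖φ‖_p ≥ c · (n / log V(n)) · ‖∇φ‖_p. Equivalently, the ℓ^p-isoperimetric profile inside balls satisfies J^b_{G,p}(n) ⪰ n / log V(n). -/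
open scoped Pointwise

/-- `ℓ^p`-norm of a (finitely supported) function `φ : G → ℝ`:
`‖φ‖_p = (Σ_g |φ g|^p)^{1/p}`. -/
noncomputable def lpNorm {G : Type*} (p : ℝ) (φ : G → ℝ) : ℝ :=
  (∑' g, |φ g| ^ p) ^ (1 / p)

/-- Left gradient associated with a finite generating set `S`:
`|∇φ|(g) = max_{s ∈ S} |φ (s·g) - φ g|`. -/
noncomputable def sgrad {G : Type*} [Mul G] (S : Finset G) (hS : S.Nonempty)
    (φ : G → ℝ) : G → ℝ :=
  fun g => S.sup' hS fun s => |φ (s * g) - φ g|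

private lemma ball_finite {G : Type*} [Group G] (S : Finset G) (n : ℕ) :
    ((S : Set G) ^ n).Finite := by
  induction n with
  | zero => simp
  | succ n ih => rw [pow_succ]; exact ih.mul S.finite_toSet

private lemma exists_pow_mem {G : Type*} [Group G] (S : Finset G)
    (hSsymm : ∀ s ∈ S, s⁻¹ ∈ S) (hSgen : Subgroup.closure (S : Set G) = ⊤) (g : G) :
    ∃ n, g ∈ (S : Set G) ^ n := by
  have hinv : ∀ (n : ℕ) (x : G), x ∈ (S : Set G) ^ n → x⁻¹ ∈ (S : Set G) ^ n := by
    intro n x hx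
    have h1 : ((S : Set G))⁻¹ ⊆ (S : Set G) := by
      intro y hy
      have : y⁻¹ ∈ S := by simpa using hy
      simpa using hSsymm y⁻¹ this
    have h2 : x⁻¹ ∈ ((S : Set G) ^ n)⁻¹ := by simpa using hx
    rw [← inv_pow] at h2
    exact Set.pow_subset_pow_left h1 h2
  let H : Subgroup G :=
    { carrier := {g : G | ∃ n, g ∈ (S : Set G) ^ n}
      one_mem' := ⟨0, by simp⟩
      mul_mem' := by
        rintro a b ⟨m, ha⟩ ⟨k, hb⟩
        exact ⟨m + k, by rw [pow_add]; exact Set.mul_mem_mul ha hb⟩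
      inv_mem' := by rintro a ⟨m, ha⟩; exact ⟨m, hinv m a ha⟩ }
  have hle : Subgroup.closure (S : Set G) ≤ H :=
    (Subgroup.closure_le H).2 (fun x hx => ⟨1, by simpa using hx⟩)
  exact hle (hSgen ▸ Subgroup.mem_top g)

private lemma lpNorm_le_card {G : Type*} (p : ℝ) (hp : 0 < p) (f : G → ℝ) (T : Finset G)
    (h0 : ∀ g ∉ T, f g = 0) (hle : ∀ g, |f g| ≤ 1) :
    lpNorm p f ≤ (T.card : ℝ) ^ (1/p) := by
  unfold lpNorm
  apply Real.rpow_le_rpow (tsum_nonneg fun g => Real.rpow_nonneg (abs_nonneg _) p) ?_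
    (by positivity)
  rw [tsum_eq_sum (s := T) (fun g hg => by rw [h0 g hg, abs_zero, Real.zero_rpow hp.ne'])]
  calc ∑ g ∈ T, |f g| ^ p ≤ ∑ _g ∈ T, (1 : ℝ) :=
        Finset.sum_le_sum fun g _ => Real.rpow_le_one (abs_nonneg _) (hle g) hp.le
  _ = T.card := by simp

private lemma card_le_lpNorm {G : Type*} (p : ℝ) (hp : 0 < p) (f : G → ℝ) (T T' : Finset G)
    (hsub : T' ⊆ T) (h0 : ∀ g ∉ T, f g = 0) (a : ℝ) (ha : 0 ≤ a)
    (hge : ∀ g ∈ T', a ≤ f g) :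
    ((T'.card : ℝ) * a ^ p) ^ (1/p) ≤ lpNorm p f := by
  unfold lpNorm
  apply Real.rpow_le_rpow (by positivity) ?_ (by positivity)
  rw [tsum_eq_sum (s := T) (fun g hg => by rw [h0 g hg, abs_zero, Real.zero_rpow hp.ne'])]
  have h1 : ∀ g ∈ T', a ^ p ≤ |f g| ^ p := fun g hg =>
    Real.rpow_le_rpow ha (le_trans (hge g hg) (le_abs_self _)) hp.le
  calc (T'.card : ℝ) * a ^ p = T'.card • a ^ p := by rw [nsmul_eq_mul]
  _ ≤ ∑ g ∈ T', |f g| ^ p := Finset.card_nsmul_le_sum T' _ _ h1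
  _ ≤ ∑ g ∈ T, |f g| ^ p :=
      Finset.sum_le_sum_of_subset_of_nonneg hsub (fun g _ _ => by positivity)

set_option maxHeartbeats 1000000 in
/-- **Lower bound on the `ℓ^p`-isoperimetric profile inside balls via volume growth.**
Let `G` be an infinite group generated by a finite symmetric set `S ∋ 1`, let `2 ≤ p < ∞`,
and set `V n = |S^n|`.  Then there is `c > 0` such that for every `n ≥ 2` there is a nonzero
finitely supported `φ : G → ℝ` with `supp φ ⊆ B(1,n) = S^n` and
`‖φ‖_p ≥ c · (n / log V(n)) · ‖∇φ‖_p`; i.e. `J^b_{G,p}(n) ⪰ n / log V(n)`. -/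
theorem stmt_8 {G : Type*} [Group G] [Infinite G] (S : Finset G)
    (hS1 : (1 : G) ∈ S) (hSsymm : ∀ s ∈ S, s⁻¹ ∈ S)
    (hSgen : Subgroup.closure (S : Set G) = ⊤)
    (p : ℝ) (hp : 2 ≤ p) :
    ∃ c : ℝ, 0 < c ∧ ∀ n : ℕ, 2 ≤ n →
      ∃ φ : G → ℝ, φ ≠ 0 ∧ (Function.support φ).Finite ∧
        Function.support φ ⊆ (S : Set G) ^ n ∧
        c * ((n : ℝ) / Real.log ((((S : Set G) ^ n).ncard : ℝ))) *
            lpNorm p (sgrad S ⟨1, hS1⟩ φ) ≤ lpNorm p φ := by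
  classical
  have hp0 : (0:ℝ) < p := lt_of_lt_of_le two_pos hp
  have hpinv : 1/p ≤ 1 := by
    rw [div_le_one hp0]; linarith
  have hpinv0 : 0 < 1/p := by positivity
  -- word length
  have hex : ∀ g : G, ∃ n, g ∈ (S : Set G) ^ n := exists_pow_mem S hSsymm hSgen
  set ℓ : G → ℕ := fun g => Nat.find (hex g) with hℓdef
  have hℓspec : ∀ g, g ∈ (S : Set G) ^ (ℓ g) := fun g => Nat.find_spec (hex g)
  have hℓle : ∀ g n, g ∈ (S : Set G) ^ n → ℓ g ≤ n := fun g n h => Nat.find_le h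
  have hℓmem : ∀ g n, ℓ g ≤ n → g ∈ (S : Set G) ^ n := fun g n h =>
    Set.pow_subset_pow_right hS1 h (hℓspec g)
  have hℓone : ℓ 1 = 0 := Nat.le_zero.mp (hℓle 1 0 (by simp))
  have hℓmul : ∀ s ∈ S, ∀ g, ℓ (s * g) ≤ ℓ g + 1 := by
    intro s hs g
    exact hℓle _ _ (by rw [pow_succ']; exact Set.mul_mem_mul hs (hℓspec g))
  have hℓinv : ∀ s ∈ S, ∀ g, ℓ g ≤ ℓ (s * g) + 1 := by
    intro s hs g
    have := hℓmul s⁻¹ (hSsymm s hs) (s * g)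
    simpa [inv_mul_cancel_left] using this
  clear_value ℓ
  -- a nontrivial element of S
  have hs0 : ∃ s ∈ S, s ≠ (1:G) := by
    by_contra h
    push_neg at h
    have hsub : (S : Set G) ⊆ {1} := fun x hx => h x (by simpa using hx)
    have htop : (⊤ : Subgroup G) ≤ Subgroup.closure {(1:G)} :=
      hSgen ▸ Subgroup.closure_mono hsub
    rw [Subgroup.closure_singleton_one] at htop
    obtain ⟨g, hg⟩ := exists_ne (1:G)
    exact hg (Subgroup.mem_bot.mp (htop (Subgroup.mem_top g)))
  obtain ⟨s₀, hs₀S, hs₀⟩ := hs0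
  have hcard1 : (1:ℝ) ≤ S.card := by
    have := Finset.card_pos.mpr ⟨1, hS1⟩
    exact_mod_cast this
  have hlog2 : (0:ℝ) < Real.log 2 := Real.log_pos one_lt_two
  refine ⟨Real.log 2 / (8 * S.card), by positivity, ?_⟩
  intro n hn
  set V : ℕ → ℕ := fun m => ((S : Set G) ^ m).ncard with hVdef
  have hVmono : ∀ {i j : ℕ}, i ≤ j → V i ≤ V j := fun {i j} hij =>
    Set.ncard_le_ncard (Set.pow_subset_pow_right hS1 hij) (ball_finite S j)
  have hV0 : V 0 = 1 := by
    rw [hVdef]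
    simp only [pow_zero]
    rw [← Set.singleton_one, Set.ncard_singleton]
  have hV2 : 2 ≤ V n := by
    have h1n : (1:G) ∈ (S : Set G) ^ n :=
      Set.pow_subset_pow_right hS1 (by omega : 1 ≤ n) (by simpa using hS1)
    have hsn : s₀ ∈ (S : Set G) ^ n :=
      Set.pow_subset_pow_right hS1 (by omega : 1 ≤ n) (by simpa using hs₀S)
    have hpair : ({(1:G), s₀} : Set G) ⊆ (S : Set G) ^ n := by
      intro x hx; rcases hx with h | h <;> subst h <;> assumption
    calc 2 = ({(1:G), s₀} : Set G).ncard := (Set.ncard_pair (Ne.symm hs₀)).symm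
    _ ≤ V n := Set.ncard_le_ncard hpair (ball_finite S n)
  have hlogV : Real.log 2 ≤ Real.log (V n) :=
    Real.log_le_log two_pos (by exact_mod_cast hV2)
  have hlogVpos : (0:ℝ) < Real.log (V n) := lt_of_lt_of_le hlog2 hlogV
  -- K := least K with V n ≤ 2^K
  have hKex : ∃ K : ℕ, V n ≤ 2 ^ K := ⟨V n, (Nat.lt_two_pow_self).le⟩
  set K := Nat.find hKex with hKdef
  have hK : V n ≤ 2 ^ K := Nat.find_spec hKex
  have hKmin : ∀ j < K, 2 ^ j < V n := fun j hj =>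
    Nat.lt_of_not_le (Nat.find_min hKex hj)
  have hK1 : 1 ≤ K := by
    rcases Nat.eq_zero_or_pos K with h | h
    · exfalso; have := hK; rw [h] at this; omega
    · exact h
  have hKlog : (K:ℝ) * Real.log 2 ≤ 2 * Real.log (V n) := by
    have hj : K - 1 < K := by omega
    have h2 : (2:ℝ) ^ (K-1) < (V n : ℝ) := by exact_mod_cast hKmin (K-1) hj
    have h3 : ((K:ℝ) - 1) * Real.log 2 ≤ Real.log (V n) := by
      have := Real.log_le_log (by positivity) h2.le
      rw [Real.log_pow] at this
      have hKcast : ((K - 1 : ℕ) : ℝ) = (K:ℝ) - 1 := by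
        rw [Nat.cast_sub hK1]; norm_num
      rw [hKcast] at this
      exact this
    have h4 : (K:ℝ) * Real.log 2 = ((K:ℝ) - 1) * Real.log 2 + Real.log 2 := by ring
    linarith
  clear_value K
  -- case split
  by_cases hcase : n < K
  · -- Case A : large growth, use Dirac mass at 1
    have hnlog : (n:ℝ) * Real.log 2 ≤ Real.log (V n) := by
      have h2 : 2 ^ n < V n := hKmin n hcase
      have h2' : (2:ℝ) ^ n < (V n : ℝ) := by exact_mod_cast h2
      have := Real.log_le_log (by positivity) h2'.le
      rwa [Real.log_pow] at this
    set φ : G → ℝ := fun g => if g = 1 then 1 else 0 with hφdef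
    have hφ1 : φ 1 = 1 := by simp [hφdef]
    have hφsupp : Function.support φ ⊆ {(1:G)} := by
      intro g hg
      simp only [Function.mem_support, hφdef] at hg
      by_contra h
      simp only [Set.mem_singleton_iff] at h
      exact hg (if_neg h)
    have h1n : (1:G) ∈ (S : Set G) ^ n :=
      Set.pow_subset_pow_right hS1 (by omega : 1 ≤ n) (by simpa using hS1)
    refine ⟨φ, fun h => by simpa [hφ1] using congrFun h 1,
      (Set.finite_singleton _).subset hφsupp,
      hφsupp.trans (by simpa using h1n), ?_⟩
    -- lower bound on lpNorm φ
    have hφlow : (1:ℝ) ≤ lpNorm p φ := by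
      have := card_le_lpNorm p hp0 φ {(1:G)} {(1:G)} (le_refl _)
        (fun g hg => by
          simp only [Finset.mem_singleton] at hg
          simp [hφdef, hg]) 1 zero_le_one
        (fun g hg => by
          simp only [Finset.mem_singleton] at hg
          simp [hφdef, hg])
      simpa [Real.one_rpow] using this
    -- upper bound on gradient norm
    have hφ01 : ∀ g, φ g = 0 ∨ φ g = 1 := by
      intro g; by_cases h : g = 1 <;> simp [hφdef, h]
    have hterm : ∀ s g : G, |φ (s * g) - φ g| ≤ 1 := by
      intro s g
      rcases hφ01 (s * g) with h1 | h1 <;> rcases hφ01 g with h2 | h2 <;>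
        rw [h1, h2] <;> norm_num
    have hgle : ∀ g, sgrad S ⟨1, hS1⟩ φ g ≤ 1 := fun g =>
      Finset.sup'_le _ _ (fun s _ => hterm s g)
    have hg0 : ∀ g, 0 ≤ sgrad S ⟨1, hS1⟩ φ g := fun g =>
      le_trans (abs_nonneg _) (Finset.le_sup' (fun s => |φ (s * g) - φ g|) hS1)
    have hgsupp : ∀ g : G, g ∉ S → sgrad S ⟨1, hS1⟩ φ g = 0 := by
      intro g hg
      have hterm0 : ∀ s ∈ S, |φ (s * g) - φ g| = 0 := by
        intro s hs
        have hg1 : g ≠ 1 := fun h => hg (h ▸ hS1)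
        have hsg1 : s * g ≠ 1 := by
          intro h
          have hgs : g = s⁻¹ := eq_inv_of_mul_eq_one_right h
          exact hg (hgs ▸ hSsymm s hs)
        simp [hφdef, hg1, hsg1]
      refine le_antisymm (Finset.sup'_le _ _ (fun s hs => (hterm0 s hs).le)) (hg0 g)
    have hgnorm : lpNorm p (sgrad S ⟨1, hS1⟩ φ) ≤ (S.card : ℝ) := by
      have h1 := lpNorm_le_card p hp0 (sgrad S ⟨1, hS1⟩ φ) S
        (fun g hg => hgsupp g hg)
        (fun g => by rw [abs_of_nonneg (hg0 g)]; exact hgle g)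
      refine h1.trans ?_
      calc (S.card : ℝ) ^ (1/p) ≤ (S.card : ℝ) ^ (1:ℝ) :=
            Real.rpow_le_rpow_of_exponent_le hcard1 hpinv
      _ = S.card := Real.rpow_one _
    -- conclude
    have hfrac : (n:ℝ) / Real.log (V n) ≤ 1 / Real.log 2 := by
      rw [div_le_div_iff₀ hlogVpos hlog2]
      linarith
    have hnn : (0:ℝ) ≤ (n:ℝ) / Real.log (V n) := by positivity
    show Real.log 2 / (8 * S.card) * ((n:ℝ) / Real.log (V n)) *
      lpNorm p (sgrad S ⟨1, hS1⟩ φ) ≤ lpNorm p φ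
    calc Real.log 2 / (8 * S.card) * ((n:ℝ) / Real.log (V n)) *
          lpNorm p (sgrad S ⟨1, hS1⟩ φ)
        ≤ Real.log 2 / (8 * S.card) * (1 / Real.log 2) * (S.card : ℝ) := by
          apply mul_le_mul
          · exact mul_le_mul_of_nonneg_left hfrac (by positivity)
          · exact hgnorm
          · exact le_trans (Real.rpow_nonneg (tsum_nonneg fun g =>
              Real.rpow_nonneg (abs_nonneg _) p) _) (le_refl _)
          · positivity
    _ = 1/8 := by
        field_simp
    _ ≤ 1 := by norm_num
    _ ≤ lpNorm p φ := hφlow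
  · -- Case B : K ≤ n, tent function via pigeonhole
    push_neg at hcase
    set a := n / K with hadef
    have ha1 : 1 ≤ a := (Nat.one_le_div_iff (by omega)).mpr hcase
    set m := n / a with hmdef
    have hKm : K ≤ m := by
      rw [hmdef, Nat.le_div_iff_mul_le (by omega)]
      calc K * a = a * K := mul_comm _ _
      _ ≤ n := by rw [hadef]; exact Nat.div_mul_le_self n K
    have hman : m * a ≤ n := Nat.div_mul_le_self n a
    have hn2aK : (n:ℕ) ≤ 2 * (a * K) := by
      have h1 : a * K + n % K = n := by rw [hadef, Nat.mul_comm]; exact Nat.div_add_mod n K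
      have h2 : n % K < K := Nat.mod_lt n (by omega)
      have h3 : K ≤ a * K := Nat.le_mul_of_pos_left K (by omega)
      omega
    -- pigeonhole : find an annulus with small growth
    have hpig : ∃ k, k < m ∧ V ((k+1) * a) ≤ 2 * V (k * a) := by
      by_contra hcon
      push_neg at hcon
      have hgrow : ∀ k, 1 ≤ k → k ≤ m → 2 ^ k < V (k * a) := by
        intro k
        induction k with
        | zero => omega
        | succ j ih =>
          intro _ hj
          rcases Nat.eq_zero_or_pos j with hj0 | hj0
          · subst hj0
            have := hcon 0 (by omega)
            simpa [hV0] using this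
          · have h1 := ih hj0 (by omega)
            have h2 := hcon j (by omega)
            calc 2 ^ (j+1) = 2 * 2 ^ j := by ring
            _ < 2 * V (j * a) := by omega
            _ < V ((j+1) * a) := h2
      have h1 := hgrow m (by omega) le_rfl
      have h2 : V (m * a) ≤ V n := hVmono hman
      have h3 : 2 ^ K ≤ 2 ^ m := Nat.pow_le_pow_right (by omega) hKm
      omega
    obtain ⟨k, hkm, hkV⟩ := hpig
    set R := (k + 1) * a with hRdef
    have hRn : R ≤ n := le_trans (Nat.mul_le_mul_right a (by omega)) hman
    have hkaR : k * a ≤ R := Nat.mul_le_mul_right a (by omega)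
    have haR : a ≤ R := by
      calc a = 1 * a := (one_mul a).symm
      _ ≤ R := Nat.mul_le_mul_right a (by omega)
    -- tent function
    set φ : G → ℝ := fun g => max 0 (min (a:ℝ) ((R:ℝ) - (ℓ g : ℝ))) with hφdef
    have hφ0 : ∀ g, 0 ≤ φ g := fun g => le_max_left _ _
    have hφ1 : φ 1 = a := by
      rw [hφdef]
      simp only [hℓone, Nat.cast_zero, sub_zero]
      rw [min_eq_left (by exact_mod_cast haR), max_eq_right (Nat.cast_nonneg _)]
    have hφne : φ ≠ 0 := by
      intro h
      have := congrFun h 1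
      rw [hφ1] at this
      have : (a:ℝ) = 0 := this
      have : a = 0 := by exact_mod_cast this
      omega
    have hφsupp : ∀ g, φ g ≠ 0 → ℓ g < R := by
      intro g hg
      by_contra h
      push_neg at h
      have h1 : (R:ℝ) - (ℓ g : ℝ) ≤ 0 := by
        have : (R:ℝ) ≤ (ℓ g : ℝ) := by exact_mod_cast h
        linarith
      have h2 : min (a:ℝ) ((R:ℝ) - (ℓ g : ℝ)) ≤ 0 := le_trans (min_le_right _ _) h1
      exact hg (by rw [hφdef]; exact max_eq_left h2)
    have hφsuppn : Function.support φ ⊆ (S : Set G) ^ n := fun g hg =>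
      hℓmem g n (le_trans (hφsupp g hg).le hRn)
    have hφfin : (Function.support φ).Finite :=
      (ball_finite S n).subset hφsuppn
    -- Lipschitz bound
    have hlip : ∀ s ∈ S, ∀ g, |φ (s * g) - φ g| ≤ 1 := by
      intro s hs g
      have h1 : |φ (s * g) - φ g| ≤
          |min (a:ℝ) ((R:ℝ) - (ℓ (s * g) : ℝ)) - min (a:ℝ) ((R:ℝ) - (ℓ g : ℝ))| := by
        rw [hφdef]
        simp only [max_comm (0:ℝ)]
        exact abs_max_sub_max_le_abs _ _ _
      have h2 : |min (a:ℝ) ((R:ℝ) - (ℓ (s * g) : ℝ)) - min (a:ℝ) ((R:ℝ) - (ℓ g : ℝ))| ≤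
          |((R:ℝ) - (ℓ (s * g) : ℝ)) - ((R:ℝ) - (ℓ g : ℝ))| := by
        have := abs_min_sub_min_le_max (a:ℝ) ((R:ℝ) - (ℓ (s * g) : ℝ)) (a:ℝ)
          ((R:ℝ) - (ℓ g : ℝ))
        simpa using this
      have h3 : |((R:ℝ) - (ℓ (s * g) : ℝ)) - ((R:ℝ) - (ℓ g : ℝ))| ≤ 1 := by
        have hu := hℓmul s hs g
        have hv := hℓinv s hs g
        rw [abs_le]
        constructor
        · have : (ℓ (s*g) : ℝ) ≤ (ℓ g : ℝ) + 1 := by exact_mod_cast hu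
          linarith
        · have : (ℓ g : ℝ) ≤ (ℓ (s*g) : ℝ) + 1 := by exact_mod_cast hv
          linarith
      linarith
    have hgle : ∀ g, sgrad S ⟨1, hS1⟩ φ g ≤ 1 := fun g =>
      Finset.sup'_le _ _ (fun s hs => hlip s hs g)
    have hg0 : ∀ g, 0 ≤ sgrad S ⟨1, hS1⟩ φ g := fun g =>
      le_trans (abs_nonneg _) (Finset.le_sup' (fun s => |φ (s * g) - φ g|) hS1)
    have hφzero : ∀ g, R ≤ ℓ g → φ g = 0 := by
      intro g h
      have h1 : (R:ℝ) - (ℓ g : ℝ) ≤ 0 := by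
        have : (R:ℝ) ≤ (ℓ g : ℝ) := by exact_mod_cast h
        linarith
      rw [hφdef]
      exact max_eq_left (le_trans (min_le_right _ _) h1)
    have hgsupp : ∀ g : G, g ∉ (S : Set G) ^ R → sgrad S ⟨1, hS1⟩ φ g = 0 := by
      intro g hg
      have hRl : R < ℓ g := by
        by_contra h
        push_neg at h
        exact hg (hℓmem g R h)
      have hterm0 : ∀ s ∈ S, |φ (s * g) - φ g| = 0 := by
        intro s hs
        have h1 : φ g = 0 := hφzero g hRl.le
        have h2 : φ (s * g) = 0 := by
          apply hφzero
          have := hℓinv s hs g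
          omega
        simp [h1, h2]
      exact le_antisymm (Finset.sup'_le _ _ (fun s hs => (hterm0 s hs).le)) (hg0 g)
    -- finsets
    set Fn : Finset G := (ball_finite S R).toFinset with hFndef
    set Fk : Finset G := (ball_finite S (k * a)).toFinset with hFkdef
    have hsubF : Fk ⊆ Fn := by
      intro g hg
      rw [hFndef, Set.Finite.mem_toFinset]
      rw [hFkdef, Set.Finite.mem_toFinset] at hg
      exact Set.pow_subset_pow_right hS1 hkaR hg
    have hFncard : Fn.card = V R := (Set.ncard_eq_toFinset_card _ _).symm
    have hFkcard : Fk.card = V (k * a) := (Set.ncard_eq_toFinset_card _ _).symm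
    -- gradient norm bound
    have hgnorm : lpNorm p (sgrad S ⟨1, hS1⟩ φ) ≤
        (2:ℝ) * ((V (k * a) : ℝ)) ^ (1/p) := by
      have h1 := lpNorm_le_card p hp0 (sgrad S ⟨1, hS1⟩ φ) Fn
        (fun g hg => hgsupp g (by rwa [hFndef, Set.Finite.mem_toFinset] at hg))
        (fun g => by rw [abs_of_nonneg (hg0 g)]; exact hgle g)
      have h2 : ((Fn.card : ℝ)) ^ (1/p) ≤ ((2 * V (k * a) : ℕ) : ℝ) ^ (1/p) := by
        apply Real.rpow_le_rpow (Nat.cast_nonneg _) ?_ hpinv0.le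
        have : Fn.card ≤ 2 * V (k * a) := by rw [hFncard]; exact le_trans hkV (le_refl _)
        exact_mod_cast this
      refine (h1.trans h2).trans ?_
      rw [Nat.cast_mul, Nat.cast_ofNat,
        Real.mul_rpow (by norm_num) (Nat.cast_nonneg _)]
      apply mul_le_mul_of_nonneg_right ?_ (Real.rpow_nonneg (Nat.cast_nonneg _) _)
      calc (2:ℝ) ^ (1/p) ≤ (2:ℝ) ^ (1:ℝ) :=
            Real.rpow_le_rpow_of_exponent_le one_le_two hpinv
      _ = 2 := Real.rpow_one _
    -- φ norm lower bound
    have hφnorm : (a:ℝ) * ((V (k * a) : ℝ)) ^ (1/p) ≤ lpNorm p φ := by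
      have hφa : ∀ g ∈ Fk, (a:ℝ) ≤ φ g := by
        intro g hg
        rw [hFkdef, Set.Finite.mem_toFinset] at hg
        have hgl : ℓ g ≤ k * a := hℓle g _ hg
        have h1 : (a:ℝ) ≤ (R:ℝ) - (ℓ g : ℝ) := by
          have h2 : ℓ g + a ≤ R := by
            rw [hRdef]
            calc ℓ g + a ≤ k * a + a := by omega
            _ = (k + 1) * a := by ring
          have : ((ℓ g : ℕ) : ℝ) + (a:ℝ) ≤ (R:ℝ) := by exact_mod_cast h2
          linarith
        rw [hφdef]
        calc (a:ℝ) = min (a:ℝ) (a:ℝ) := (min_self _).symm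
        _ ≤ min (a:ℝ) ((R:ℝ) - (ℓ g : ℝ)) := min_le_min (le_refl _) h1
        _ ≤ max 0 (min (a:ℝ) ((R:ℝ) - (ℓ g : ℝ))) := le_max_right _ _
      have h1 := card_le_lpNorm p hp0 φ Fn Fk hsubF
        (fun g hg => by
          by_contra h
          exact hg (by
            rw [hFndef, Set.Finite.mem_toFinset]
            exact hℓmem g R (hφsupp g h).le))
        (a:ℝ) (Nat.cast_nonneg _) hφa
      refine le_trans ?_ h1
      rw [hFkcard,
        Real.mul_rpow (Nat.cast_nonneg _) (Real.rpow_nonneg (Nat.cast_nonneg _) _),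
        one_div, Real.rpow_rpow_inv (Nat.cast_nonneg _) hp0.ne',
        mul_comm]
    refine ⟨φ, hφne, hφfin, hφsuppn, ?_⟩
    show Real.log 2 / (8 * S.card) * ((n:ℝ) / Real.log (V n)) *
      lpNorm p (sgrad S ⟨1, hS1⟩ φ) ≤ lpNorm p φ
    -- arithmetic conclusion
    have hkey : Real.log 2 / (8 * S.card) * ((n:ℝ) / Real.log (V n)) ≤ (a:ℝ) / 2 := by
      have hn2aK' : (n:ℝ) ≤ 2 * ((a:ℝ) * (K:ℝ)) := by exact_mod_cast hn2aK
      have hstep : (n:ℝ) * Real.log 2 ≤ 4 * (a:ℝ) * Real.log (V n) := by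
        nlinarith [mul_le_mul_of_nonneg_right hn2aK' hlog2.le,
          mul_le_mul_of_nonneg_left hKlog (by positivity : (0:ℝ) ≤ 2 * (a:ℝ))]
      have hc : Real.log 2 / (8 * S.card) ≤ Real.log 2 / 8 := by
        apply div_le_div_of_nonneg_left hlog2.le (by norm_num)
        nlinarith
      calc Real.log 2 / (8 * S.card) * ((n:ℝ) / Real.log (V n))
          ≤ Real.log 2 / 8 * ((n:ℝ) / Real.log (V n)) :=
            mul_le_mul_of_nonneg_right hc (by positivity)
      _ = (n:ℝ) * Real.log 2 / (8 * Real.log (V n)) := by ring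
      _ ≤ 4 * (a:ℝ) * Real.log (V n) / (8 * Real.log (V n)) := by
          apply div_le_div_of_nonneg_right ?_ (by positivity)
          exact hstep
      _ = (a:ℝ) / 2 := by field_simp; ring
    calc Real.log 2 / (8 * S.card) * ((n:ℝ) / Real.log (V n)) *
          lpNorm p (sgrad S ⟨1, hS1⟩ φ)
        ≤ ((a:ℝ) / 2) * ((2:ℝ) * ((V (k * a) : ℝ)) ^ (1/p)) := by
          apply mul_le_mul hkey hgnorm
          · exact le_trans (Real.rpow_nonneg (tsum_nonneg fun g =>
              Real.rpow_nonneg (abs_nonneg _) p) _) (le_refl _)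
          · exact div_nonneg (Nat.cast_nonneg _) (by norm_num)
    _ = (a:ℝ) * ((V (k * a) : ℝ)) ^ (1/p) := by ring
    _ ≤ lpNorm p φ := hφnorm
end

section
/- Let G be an infinite group generated by a finite symmetric set S with 1 ∈ S, let 1 ≤ p < ∞ and C ≥ 1, and let (α_n)_{n≥1} be a sequence of positive integers. Suppose that for every n ≥ 1 there are nonempty finite subsets H_n ⊆ H'_n of G such that S^{α_n}·H_n ⊆ H'_n, |H'_n| ≤ C·|H_n|, and H'_n ⊆ B(1, C·n) (an α-controlled sequence of Følner pairs). Then for every n ≥ 1 there exists a nonzero finitely supported function φ : G → ℝ with supp φ ⊆ H'_n and ‖φ‖_p ≥ ((1+|S|)·C)^{−1/p} · α_n · ‖∇φ‖_p. In particular, J^b_{G,p}(⌈C⌉·n) ≥ ((1+|S|)·C)^{−1/p}·α_n for all n ≥ 1. -/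
open scoped Pointwise

/-- The `ℓ^p`-isoperimetric profile inside balls:
`J^b_{G,p}(n) = sup { ‖φ‖_p / ‖∇φ‖_p : φ ≠ 0 finitely supported, supp φ ⊆ S^n }`. -/
noncomputable def Jb {G : Type*} [Group G] (p : ℝ) (S : Finset G) (hS : S.Nonempty)
    (n : ℕ) : ℝ :=
  sSup {r : ℝ | ∃ φ : G → ℝ, φ ≠ 0 ∧ (Function.support φ).Finite ∧
    Function.support φ ⊆ (S : Set G) ^ n ∧ r = lpNorm p φ / lpNorm p (sgrad S hS φ)}

section Aux

variable {G : Type*} [Group G]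

lemma aux_lpNorm_nonneg (p : ℝ) (φ : G → ℝ) : 0 ≤ lpNorm p φ :=
  Real.rpow_nonneg (tsum_nonneg fun g => Real.rpow_nonneg (abs_nonneg _) _) _

lemma aux_sgrad_nonneg (S : Finset G) (hS : S.Nonempty) (φ : G → ℝ) (g : G) :
    0 ≤ sgrad S hS φ g := by
  obtain ⟨s, hs⟩ := hS
  unfold sgrad
  refine le_trans (abs_nonneg (φ (s * g) - φ g)) ?_
  exact Finset.le_sup' (fun t => |φ (t * g) - φ g|) hs

lemma aux_rpow_inv_self {p : ℝ} (hp : 1 ≤ p) {x : ℝ} (hx : 0 ≤ x) :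
    (x ^ p) ^ (1 / p) = x := by
  rw [← Real.rpow_mul hx, mul_one_div_cancel (by linarith : p ≠ 0), Real.rpow_one]

lemma aux_pow_finite (S : Finset G) (m : ℕ) : ((S : Set G) ^ m).Finite := by
  classical
  rw [← Finset.coe_pow]
  exact (S ^ m).finite_toSet

lemma aux_mem_pow_inv {S : Finset G} (hsymm : ∀ s ∈ S, s⁻¹ ∈ S) :
    ∀ {m : ℕ} {x : G}, x ∈ (S : Set G) ^ m → x⁻¹ ∈ (S : Set G) ^ m := by
  intro m
  induction m with
  | zero => intro x hx; rw [pow_zero] at *; rw [Set.mem_one] at hx; simp [hx]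
  | succ m ih =>
    intro x hx
    rw [pow_succ'] at hx
    rw [pow_succ]
    obtain ⟨s, hs, y, hy, rfl⟩ := hx
    rw [mul_inv_rev]
    exact Set.mul_mem_mul (ih hy) (hsymm s hs)

lemma aux_exists_mem_pow {S : Finset G} (hsymm : ∀ s ∈ S, s⁻¹ ∈ S)
    (hgen : Subgroup.closure (S : Set G) = ⊤) (x : G) :
    ∃ m, x ∈ (S : Set G) ^ m := by
  have hx : x ∈ Subgroup.closure (S : Set G) := hgen ▸ Subgroup.mem_top x
  induction hx using Subgroup.closure_induction with
  | mem y hy => exact ⟨1, by simpa [pow_one] using hy⟩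
  | one => exact ⟨0, by simp [pow_zero, Set.mem_one]⟩
  | mul y z hy hz ihy ihz =>
    obtain ⟨m₁, h₁⟩ := ihy
    obtain ⟨m₂, h₂⟩ := ihz
    exact ⟨m₁ + m₂, by rw [pow_add]; exact Set.mul_mem_mul h₁ h₂⟩
  | inv y hy ihy =>
    obtain ⟨m, h⟩ := ihy
    exact ⟨m, aux_mem_pow_inv hsymm h⟩

lemma aux_abs_le_lpNorm (p : ℝ) (hp : 1 ≤ p) (f : G → ℝ) (F : Finset G)
    (hF : ∀ b ∉ F, f b = 0) (g : G) : |f g| ≤ lpNorm p f := by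
  have hp0 : (0 : ℝ) < p := lt_of_lt_of_le one_pos hp
  have hsum : Summable (fun g => |f g| ^ p) :=
    summable_of_ne_finset_zero (s := F)
      (fun b hb => by rw [hF b hb, abs_zero, Real.zero_rpow (ne_of_gt hp0)])
  have h1 : |f g| ^ p ≤ ∑' g, |f g| ^ p :=
    Summable.le_tsum hsum g (fun j _ => Real.rpow_nonneg (abs_nonneg _) _)
  calc |f g| = (|f g| ^ p) ^ (1 / p) := (aux_rpow_inv_self hp (abs_nonneg _)).symm
    _ ≤ (∑' g, |f g| ^ p) ^ (1 / p) :=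
        Real.rpow_le_rpow (Real.rpow_nonneg (abs_nonneg _) _) h1 (by positivity)

lemma aux_sgrad_support_subset (S : Finset G) (hS1 : (1 : G) ∈ S) (φ : G → ℝ) :
    Function.support (sgrad S ⟨1, hS1⟩ φ) ⊆ (S : Set G)⁻¹ * Function.support φ := by
  intro g hg
  obtain ⟨s, hs, hEq⟩ := Finset.exists_mem_eq_sup' (⟨1, hS1⟩ : S.Nonempty)
    (fun s => |φ (s * g) - φ g|)
  simp only [Function.mem_support, sgrad] at hg
  rw [hEq] at hg
  have hne : φ (s * g) ≠ φ g := by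
    intro h; apply hg; rw [h, sub_self, abs_zero]
  by_cases h0 : φ g = 0
  · have hsg : φ (s * g) ≠ 0 := by rw [h0] at hne; exact hne
    have : s⁻¹ * (s * g) ∈ (S : Set G)⁻¹ * Function.support φ :=
      Set.mul_mem_mul (Set.inv_mem_inv.mpr hs) hsg
    simpa [inv_mul_cancel_left] using this
  · have : (1 : G)⁻¹ * g ∈ (S : Set G)⁻¹ * Function.support φ :=
      Set.mul_mem_mul (Set.inv_mem_inv.mpr hS1) h0
    simpa using this

lemma aux_sgrad_support_finite (S : Finset G) (hS1 : (1 : G) ∈ S) (φ : G → ℝ)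
    (hfin : (Function.support φ).Finite) :
    (Function.support (sgrad S ⟨1, hS1⟩ φ)).Finite :=
  (Set.Finite.mul (S.finite_toSet.inv) hfin).subset (aux_sgrad_support_subset S hS1 φ)

lemma aux_lpNorm_sgrad_pos [Infinite G] (S : Finset G) (hS1 : (1 : G) ∈ S)
    (hgen : Subgroup.closure (S : Set G) = ⊤) (p : ℝ) (hp : 1 ≤ p)
    (φ : G → ℝ) (hφ : φ ≠ 0) (hfin : (Function.support φ).Finite) :
    0 < lpNorm p (sgrad S ⟨1, hS1⟩ φ) := by
  have hp0 : (0 : ℝ) < p := lt_of_lt_of_le one_pos hp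
  -- find a point with nonzero gradient
  have hex : ∃ g, sgrad S ⟨1, hS1⟩ φ g ≠ 0 := by
    by_contra hcon
    push_neg at hcon
    have hstep : ∀ s ∈ S, ∀ g, φ (s * g) = φ g := by
      intro s hs g
      have h1 : |φ (s * g) - φ g| ≤ sgrad S ⟨1, hS1⟩ φ g :=
        Finset.le_sup' (fun s => |φ (s * g) - φ g|) hs
      rw [hcon g] at h1
      have := abs_nonneg (φ (s * g) - φ g)
      have : |φ (s * g) - φ g| = 0 := le_antisymm h1 this
      have := abs_eq_zero.mp this
      linarith [sub_eq_zero.mp this]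
    have hall : ∀ w : G, ∀ g : G, φ (w * g) = φ g := by
      intro w
      have hw : w ∈ Subgroup.closure (S : Set G) := hgen ▸ Subgroup.mem_top w
      induction hw using Subgroup.closure_induction with
      | mem y hy => exact hstep y hy
      | one => intro g; rw [one_mul]
      | mul y z hy hz ihy ihz => intro g; rw [mul_assoc, ihy, ihz]
      | inv y hy ihy => intro g; rw [← ihy (y⁻¹ * g), mul_inv_cancel_left]
    obtain ⟨x, hx⟩ := Function.ne_iff.mp hφ
    have huniv : Function.support φ = Set.univ := by
      ext y
      simp only [Function.mem_support, Set.mem_univ, iff_true]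
      have : φ (y * x⁻¹ * x) = φ x := hall (y * x⁻¹) x
      rw [inv_mul_cancel_right] at this
      rw [this]; exact hx
    exact Set.infinite_univ (huniv ▸ hfin)
  obtain ⟨g₀, hg₀⟩ := hex
  have hfin' := aux_sgrad_support_finite S hS1 φ hfin
  have hsum : Summable (fun g => |sgrad S ⟨1, hS1⟩ φ g| ^ p) :=
    summable_of_ne_finset_zero (s := hfin'.toFinset)
      (fun b hb => by
        rw [Function.notMem_support.mp (fun h => hb (hfin'.mem_toFinset.mpr h)),
          abs_zero, Real.zero_rpow (ne_of_gt hp0)])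
  have hpos : 0 < |sgrad S ⟨1, hS1⟩ φ g₀| ^ p :=
    Real.rpow_pos_of_pos (abs_pos.mpr hg₀) _
  have hle : |sgrad S ⟨1, hS1⟩ φ g₀| ^ p ≤ ∑' g, |sgrad S ⟨1, hS1⟩ φ g| ^ p :=
    Summable.le_tsum hsum g₀ (fun j _ => Real.rpow_nonneg (abs_nonneg _) _)
  exact Real.rpow_pos_of_pos (lt_of_lt_of_le hpos hle) _

lemma aux_telescope (S : Finset G) (φ : G → ℝ) (E : ℝ) (hE : 0 ≤ E)
    (hstep : ∀ s ∈ S, ∀ g, |φ (s * g) - φ g| ≤ E) :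
    ∀ m : ℕ, ∀ w ∈ (S : Set G) ^ m, ∀ g, |φ (w * g) - φ g| ≤ m * E := by
  intro m
  induction m with
  | zero =>
    intro w hw g
    rw [pow_zero, Set.mem_one] at hw
    simp [hw]
  | succ m ih =>
    intro w hw g
    rw [pow_succ] at hw
    obtain ⟨v, hv, s, hs, rfl⟩ := hw
    have h1 := ih v hv (s * g)
    have h2 := hstep s hs g
    have h3 : |φ (v * s * g) - φ g| ≤ |φ (v * (s * g)) - φ (s * g)| + |φ (s * g) - φ g| := by
      rw [mul_assoc]; exact abs_sub_le _ _ _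
    push_cast
    linarith

end Aux
section Master

variable {G : Type*} [Group G]

open Function

lemma aux_master (S : Finset G) (hS1 : (1 : G) ∈ S) (hsymm : ∀ s ∈ S, s⁻¹ ∈ S)
    (p C : ℝ) (hp : 1 ≤ p) (hC : 1 ≤ C)
    (a : ℕ) (ha : 1 ≤ a) (Hn H'n : Set G) (hne : Hn.Nonempty) (hfin : H'n.Finite)
    (hsub : Hn ⊆ H'n) (hpair : (S : Set G) ^ a * Hn ⊆ H'n)
    (hvol : ((H'n.ncard : ℝ)) ≤ C * ((Hn.ncard : ℝ))) :
    ∃ φ : G → ℝ, φ ≠ 0 ∧ (Function.support φ).Finite ∧ Function.support φ ⊆ H'n ∧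
      ((1 + (S.card : ℝ)) * C) ^ (-(1 / p)) * (a : ℝ) *
        lpNorm p (sgrad S ⟨1, hS1⟩ φ) ≤ lpNorm p φ := by
  classical
  have hp0 : (0 : ℝ) < p := lt_of_lt_of_le one_pos hp
  have hC0 : (0 : ℝ) < C := lt_of_lt_of_le one_pos hC
  have hS1' : (1 : G) ∈ (S : Set G) := Finset.mem_coe.mpr hS1
  set φ : G → ℝ :=
    fun g => ∑ k ∈ Finset.range a, if g ∈ (S : Set G) ^ k * Hn then (1 : ℝ) else 0 with hφdef
  -- basic values
  have hφ_nonneg : ∀ g, 0 ≤ φ g := by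
    intro g
    apply Finset.sum_nonneg
    intro k _
    split_ifs <;> norm_num
  have hφH : ∀ g ∈ Hn, φ g = a := by
    intro g hg
    have : ∀ k ∈ Finset.range a,
        (if g ∈ (S : Set G) ^ k * Hn then (1 : ℝ) else 0) = 1 := by
      intro k _
      refine if_pos ?_
      have := Set.mul_mem_mul (Set.one_mem_pow hS1' (n := k)) hg
      simpa using this
    simp only [hφdef]
    rw [Finset.sum_congr rfl this, Finset.sum_const, Finset.card_range, nsmul_eq_mul, mul_one]
  -- support
  have hsupp : Function.support φ ⊆ (S : Set G) ^ (a - 1) * Hn := by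
    intro g hg
    simp only [Function.mem_support] at hg
    by_contra hcon
    apply hg
    apply Finset.sum_eq_zero
    intro k hk
    rw [Finset.mem_range] at hk
    refine if_neg (fun hmem => hcon ?_)
    exact Set.mul_subset_mul_right
      (Set.pow_subset_pow_right hS1' (Nat.le_sub_one_of_lt hk)) hmem
  have hsub' : (S : Set G) ^ (a - 1) * Hn ⊆ H'n :=
    subset_trans (Set.mul_subset_mul_right
      (Set.pow_subset_pow_right hS1' (Nat.sub_le a 1))) hpair
  have hsuppH' : Function.support φ ⊆ H'n := hsupp.trans hsub'
  have hsuppfin : (Function.support φ).Finite := hfin.subset hsuppH'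
  -- the step inequality
  have hstep : ∀ s ∈ S, ∀ g, φ (s * g) ≤ φ g + 1 := by
    intro s hs g
    set f : ℕ → ℝ := fun k => if g ∈ (S : Set G) ^ k * Hn then (1 : ℝ) else 0 with hfdef
    have hf01 : ∀ k, 0 ≤ f k ∧ f k ≤ 1 := by
      intro k; rw [hfdef]; dsimp only; constructor <;> (split_ifs <;> norm_num)
    have h1 : φ (s * g) ≤ ∑ k ∈ Finset.range a, f (k + 1) := by
      apply Finset.sum_le_sum
      intro k _
      by_cases h : s * g ∈ (S : Set G) ^ k * Hn
      · rw [if_pos h, hfdef]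
        dsimp only
        rw [if_pos ?_]
        have : s⁻¹ * (s * g) ∈ (S : Set G) * ((S : Set G) ^ k * Hn) :=
          Set.mul_mem_mul (hsymm s hs) h
        rw [inv_mul_cancel_left, ← mul_assoc, ← pow_succ'] at this
        exact this
      · rw [if_neg h]
        exact (hf01 (k + 1)).1
    have h2 : (∑ k ∈ Finset.range a, f (k + 1)) + f 0 = (∑ k ∈ Finset.range a, f k) + f a := by
      rw [← Finset.sum_range_succ' f a, Finset.sum_range_succ f a]
    have hφg : φ g = ∑ k ∈ Finset.range a, f k := rfl
    have hfa := hf01 a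
    have hf0 := hf01 0
    rw [hφg]
    linarith
  have habs : ∀ s ∈ S, ∀ g, |φ (s * g) - φ g| ≤ 1 := by
    intro s hs g
    have h1 := hstep s hs g
    have h2 := hstep s⁻¹ (hsymm s hs) (s * g)
    rw [inv_mul_cancel_left] at h2
    rw [abs_le]
    constructor <;> linarith
  have hgrad_le_one : ∀ g, sgrad S ⟨1, hS1⟩ φ g ≤ 1 :=
    fun g => Finset.sup'_le _ _ fun s hs => habs s hs g
  -- gradient support
  have hgradsupp : Function.support (sgrad S ⟨1, hS1⟩ φ) ⊆ H'n := by
    intro g hg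
    obtain ⟨s, hs, hEq⟩ := Finset.exists_mem_eq_sup' (⟨1, hS1⟩ : S.Nonempty)
      (fun s => |φ (s * g) - φ g|)
    simp only [Function.mem_support, sgrad] at hg
    rw [hEq] at hg
    have hneq : φ (s * g) ≠ φ g := fun h => hg (by rw [h, sub_self, abs_zero])
    by_cases h0 : φ g = 0
    · have hsg : s * g ∈ Function.support φ := by
        simp only [Function.mem_support]
        rw [h0] at hneq; exact hneq
      have hsg2 : s * g ∈ (S : Set G) ^ (a - 1) * Hn := hsupp hsg
      have : s⁻¹ * (s * g) ∈ (S : Set G) * ((S : Set G) ^ (a - 1) * Hn) :=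
        Set.mul_mem_mul (hsymm s hs) hsg2
      rw [inv_mul_cancel_left, ← mul_assoc, ← pow_succ'] at this
      rw [Nat.sub_add_cancel ha] at this
      exact hpair this
    · exact hsuppH' h0
  -- finite data
  have hHfin : Hn.Finite := hfin.subset hsub
  set F : Finset G := hfin.toFinset with hFdef
  set FH : Finset G := hHfin.toFinset with hFHdef
  have hFcard : (F.card : ℝ) = (H'n.ncard : ℝ) := by
    rw [Set.ncard_eq_toFinset_card H'n hfin]
  have hFHcard : (FH.card : ℝ) = (Hn.ncard : ℝ) := by
    rw [Set.ncard_eq_toFinset_card Hn hHfin]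
  -- gradient norm bound
  set E := lpNorm p (sgrad S ⟨1, hS1⟩ φ) with hEdef
  have hE_nonneg : 0 ≤ E := aux_lpNorm_nonneg p _
  have htsumE : (∑' g, |sgrad S ⟨1, hS1⟩ φ g| ^ p)
      = ∑ g ∈ F, |sgrad S ⟨1, hS1⟩ φ g| ^ p := by
    apply tsum_eq_sum
    intro b hb
    have : sgrad S ⟨1, hS1⟩ φ b = 0 := by
      by_contra hb2
      exact hb (hfin.mem_toFinset.mpr (hgradsupp hb2))
    rw [this, abs_zero, Real.zero_rpow (ne_of_gt hp0)]
  have hE_le : E ≤ (C * (Hn.ncard : ℝ)) ^ (1 / p) := by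
    have hsum_le : (∑ g ∈ F, |sgrad S ⟨1, hS1⟩ φ g| ^ p) ≤ F.card := by
      calc (∑ g ∈ F, |sgrad S ⟨1, hS1⟩ φ g| ^ p) ≤ ∑ _g ∈ F, (1 : ℝ) := by
            apply Finset.sum_le_sum
            intro g _
            apply Real.rpow_le_one (abs_nonneg _) ?_ (le_of_lt hp0)
            rw [abs_of_nonneg (aux_sgrad_nonneg S ⟨1, hS1⟩ φ g)]
            exact hgrad_le_one g
        _ = F.card := by rw [Finset.sum_const, nsmul_eq_mul, mul_one]
    have h1 : (∑' g, |sgrad S ⟨1, hS1⟩ φ g| ^ p) ≤ C * (Hn.ncard : ℝ) := by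
      rw [htsumE]
      calc (∑ g ∈ F, |sgrad S ⟨1, hS1⟩ φ g| ^ p) ≤ (F.card : ℝ) := hsum_le
        _ = (H'n.ncard : ℝ) := hFcard
        _ ≤ C * (Hn.ncard : ℝ) := hvol
    rw [hEdef]
    unfold lpNorm
    exact Real.rpow_le_rpow (tsum_nonneg fun g => Real.rpow_nonneg (abs_nonneg _) _)
      h1 (by positivity)
  -- φ norm lower bound
  have hN_ge : (a : ℝ) * ((Hn.ncard : ℝ)) ^ (1 / p) ≤ lpNorm p φ := by
    have hsummable : Summable (fun g => |φ g| ^ p) :=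
      summable_of_ne_finset_zero (s := F)
        (fun b hb => by
          have : φ b = 0 := by
            by_contra hb2
            exact hb (hfin.mem_toFinset.mpr (hsuppH' hb2))
          rw [this, abs_zero, Real.zero_rpow (ne_of_gt hp0)])
    have hsum_ge : ((Hn.ncard : ℝ)) * (a : ℝ) ^ p ≤ ∑' g, |φ g| ^ p := by
      have h1 : (∑ g ∈ FH, |φ g| ^ p) = ((Hn.ncard : ℝ)) * (a : ℝ) ^ p := by
        have : ∀ g ∈ FH, |φ g| ^ p = (a : ℝ) ^ p := by
          intro g hg
          rw [hφH g (hHfin.mem_toFinset.mp hg), abs_of_nonneg (by positivity)]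
        rw [Finset.sum_congr rfl this, Finset.sum_const, nsmul_eq_mul, hFHcard]
      rw [← h1]
      exact Summable.sum_le_tsum FH (fun i _ => Real.rpow_nonneg (abs_nonneg _) _) hsummable
    calc (a : ℝ) * ((Hn.ncard : ℝ)) ^ (1 / p)
        = (((Hn.ncard : ℝ)) * (a : ℝ) ^ p) ^ (1 / p) := by
          rw [Real.mul_rpow (by positivity) (by positivity),
            aux_rpow_inv_self hp (by positivity : (0:ℝ) ≤ (a : ℝ))]
          ring
      _ ≤ (∑' g, |φ g| ^ p) ^ (1 / p) :=
          Real.rpow_le_rpow (by positivity) hsum_ge (by positivity)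
      _ = lpNorm p φ := rfl
  -- conclusion
  refine ⟨φ, ?_, hsuppfin, hsuppH', ?_⟩
  · obtain ⟨x, hx⟩ := hne
    intro h0
    have := hφH x hx
    rw [h0] at this
    simp only [Pi.zero_apply] at this
    have : (a : ℝ) = 0 := this.symm
    have : a = 0 := by exact_mod_cast this
    omega
  · have hD_le : ((1 + (S.card : ℝ)) * C) ^ (-(1 / p)) ≤ C ^ (-(1 / p)) := by
      apply Real.rpow_le_rpow_of_nonpos hC0
      · nlinarith [Nat.cast_nonneg (α := ℝ) S.card]
      · rw [neg_nonpos]; positivity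
    have hD_nonneg : (0:ℝ) ≤ ((1 + (S.card : ℝ)) * C) ^ (-(1 / p)) :=
      Real.rpow_nonneg (by positivity) _
    have hCC : C ^ (-(1 / p)) * (C * (Hn.ncard : ℝ)) ^ (1 / p)
        = ((Hn.ncard : ℝ)) ^ (1 / p) := by
      rw [Real.mul_rpow (le_of_lt hC0) (by positivity), ← mul_assoc,
        ← Real.rpow_add hC0, neg_add_cancel, Real.rpow_zero, one_mul]
    calc ((1 + (S.card : ℝ)) * C) ^ (-(1 / p)) * (a : ℝ) * E
        ≤ C ^ (-(1 / p)) * (a : ℝ) * ((C * (Hn.ncard : ℝ)) ^ (1 / p)) := by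
          apply mul_le_mul
          · exact mul_le_mul_of_nonneg_right hD_le (by positivity)
          · exact hE_le
          · exact hE_nonneg
          · positivity
      _ = (a : ℝ) * (C ^ (-(1 / p)) * (C * (Hn.ncard : ℝ)) ^ (1 / p)) := by ring
      _ = (a : ℝ) * ((Hn.ncard : ℝ)) ^ (1 / p) := by rw [hCC]
      _ ≤ lpNorm p φ := hN_ge

end Master
section Bdd

variable {G : Type*} [Group G]

lemma aux_jb_bddAbove [Infinite G] (S : Finset G) (hS1 : (1 : G) ∈ S)
    (hsymm : ∀ s ∈ S, s⁻¹ ∈ S) (hgen : Subgroup.closure (S : Set G) = ⊤)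
    (p : ℝ) (hp : 1 ≤ p) (n : ℕ) :
    BddAbove {r : ℝ | ∃ φ : G → ℝ, φ ≠ 0 ∧ (Function.support φ).Finite ∧
      Function.support φ ⊆ (S : Set G) ^ n ∧
      r = lpNorm p φ / lpNorm p (sgrad S ⟨1, hS1⟩ φ)} := by
  classical
  have hp0 : (0 : ℝ) < p := lt_of_lt_of_le one_pos hp
  obtain ⟨w, hw⟩ := Infinite.exists_notMem_finset (S ^ (2 * n) : Finset G)
  have hw' : w ∉ (S : Set G) ^ (2 * n) := by
    rw [← Finset.coe_pow]
    exact fun h => hw (Finset.mem_coe.mp h)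
  obtain ⟨m, hm⟩ := aux_exists_mem_pow hsymm hgen w
  refine ⟨(((S ^ n : Finset G).card : ℝ)) ^ (1 / p) * m, ?_⟩
  rintro r ⟨φ, hφ0, hfin, hsupp, rfl⟩
  set E := lpNorm p (sgrad S ⟨1, hS1⟩ φ) with hEdef
  have hE_pos : 0 < E := aux_lpNorm_sgrad_pos S hS1 hgen p hp φ hφ0 hfin
  have hgradfin := aux_sgrad_support_finite S hS1 φ hfin
  have hstep : ∀ s ∈ S, ∀ g, |φ (s * g) - φ g| ≤ E := by
    intro s hs g
    refine le_trans (Finset.le_sup' (fun t => |φ (t * g) - φ g|) hs) ?_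
    have h1 : |sgrad S ⟨1, hS1⟩ φ g| ≤ E :=
      aux_abs_le_lpNorm p hp _ hgradfin.toFinset
        (fun b hb => by
          by_contra hb2
          exact hb (hgradfin.mem_toFinset.mpr hb2)) g
    exact le_trans (le_abs_self _) h1
  have hpoint : ∀ g, |φ g| ≤ m * E := by
    intro g
    by_cases h0 : φ g = 0
    · rw [h0, abs_zero]; positivity
    · have hg : g ∈ (S : Set G) ^ n := hsupp h0
      have hwg : φ (w * g) = 0 := by
        by_contra h1
        have h2 : w * g ∈ (S : Set G) ^ n := hsupp h1
        have h3 : (w * g) * g⁻¹ ∈ (S : Set G) ^ n * (S : Set G) ^ n :=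
          Set.mul_mem_mul h2 (aux_mem_pow_inv hsymm hg)
        rw [mul_inv_cancel_right, ← pow_add] at h3
        exact hw' (by rwa [two_mul])
      have h4 := aux_telescope S φ E hE_pos.le hstep m w hm g
      rw [hwg, zero_sub, abs_neg] at h4
      exact h4
  have hN_le : lpNorm p φ ≤ ((((S ^ n : Finset G).card : ℝ)) ^ (1 / p) * m) * E := by
    have htsum : (∑' g, |φ g| ^ p)
        ≤ (((S ^ n : Finset G).card : ℝ)) * ((m : ℝ) * E) ^ p := by
      rw [tsum_eq_sum (s := (S ^ n : Finset G))
        (fun b hb => by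
          have : φ b = 0 := by
            by_contra hb2
            have : b ∈ (S : Set G) ^ n := hsupp hb2
            rw [← Finset.coe_pow] at this
            exact hb (Finset.mem_coe.mp this)
          rw [this, abs_zero, Real.zero_rpow (ne_of_gt hp0)])]
      calc (∑ g ∈ (S ^ n : Finset G), |φ g| ^ p)
          ≤ ∑ _g ∈ (S ^ n : Finset G), ((m : ℝ) * E) ^ p :=
            Finset.sum_le_sum fun g _ =>
              Real.rpow_le_rpow (abs_nonneg _) (hpoint g) (le_of_lt hp0)
        _ = (((S ^ n : Finset G).card : ℝ)) * ((m : ℝ) * E) ^ p := by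
            rw [Finset.sum_const, nsmul_eq_mul]
    calc lpNorm p φ = (∑' g, |φ g| ^ p) ^ (1 / p) := rfl
      _ ≤ ((((S ^ n : Finset G).card : ℝ)) * ((m : ℝ) * E) ^ p) ^ (1 / p) :=
          Real.rpow_le_rpow (tsum_nonneg fun g => Real.rpow_nonneg (abs_nonneg _) _)
            htsum (by positivity)
      _ = (((S ^ n : Finset G).card : ℝ)) ^ (1 / p) * ((m : ℝ) * E) := by
          rw [Real.mul_rpow (by positivity) (by positivity),
            aux_rpow_inv_self hp (by positivity)]
      _ = ((((S ^ n : Finset G).card : ℝ)) ^ (1 / p) * m) * E := by ring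
  exact (div_le_iff₀ hE_pos).mpr hN_le

end Bdd

/-- **Controlled Følner pairs give lower bounds on the isoperimetric profile inside balls.**
Let `G` be an infinite group generated by a finite symmetric set `S ∋ 1`, `1 ≤ p < ∞`,
`C ≥ 1`, and let `(H_n, H'_n)` be an `α`-controlled sequence of Følner pairs:
`S^{α_n}·H_n ⊆ H'_n`, `|H'_n| ≤ C·|H_n|` and `H'_n ⊆ B(1, C·n)`.  Then for every `n ≥ 1`
there is a nonzero finitely supported `φ` with `supp φ ⊆ H'_n` and
`‖φ‖_p ≥ ((1+|S|)·C)^{-1/p} · α_n · ‖∇φ‖_p`; in particular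
`J^b_{G,p}(⌈C⌉·n) ≥ ((1+|S|)·C)^{-1/p} · α_n`. -/
theorem stmt_10 {G : Type*} [Group G] [Infinite G] (S : Finset G)
    (hS1 : (1 : G) ∈ S) (hSsymm : ∀ s ∈ S, s⁻¹ ∈ S)
    (hSgen : Subgroup.closure (S : Set G) = ⊤)
    (p C : ℝ) (hp : 1 ≤ p) (hC : 1 ≤ C)
    (α : ℕ → ℕ) (hα : ∀ n : ℕ, 1 ≤ α n)
    (H H' : ℕ → Set G)
    (hne : ∀ n : ℕ, 1 ≤ n → (H n).Nonempty)
    (hfin : ∀ n : ℕ, 1 ≤ n → (H' n).Finite)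
    (hsub : ∀ n : ℕ, 1 ≤ n → H n ⊆ H' n)
    (hpair : ∀ n : ℕ, 1 ≤ n → (S : Set G) ^ (α n) * H n ⊆ H' n)
    (hvol : ∀ n : ℕ, 1 ≤ n → (((H' n).ncard : ℝ)) ≤ C * (((H n).ncard : ℝ)))
    (hdiam : ∀ n : ℕ, 1 ≤ n → H' n ⊆ (S : Set G) ^ (⌊C * (n : ℝ)⌋₊)) :
    (∀ n : ℕ, 1 ≤ n →
      ∃ φ : G → ℝ, φ ≠ 0 ∧ (Function.support φ).Finite ∧
        Function.support φ ⊆ H' n ∧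
        ((1 + (S.card : ℝ)) * C) ^ (-(1 / p)) * (α n : ℝ) *
            lpNorm p (sgrad S ⟨1, hS1⟩ φ) ≤ lpNorm p φ) ∧
    ∀ n : ℕ, 1 ≤ n →
      ((1 + (S.card : ℝ)) * C) ^ (-(1 / p)) * (α n : ℝ) ≤ Jb p S ⟨1, hS1⟩ (⌈C⌉₊ * n) := by
  have hS1' : (1 : G) ∈ (S : Set G) := Finset.mem_coe.mpr hS1
  have P1 : ∀ n : ℕ, 1 ≤ n →
      ∃ φ : G → ℝ, φ ≠ 0 ∧ (Function.support φ).Finite ∧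
        Function.support φ ⊆ H' n ∧
        ((1 + (S.card : ℝ)) * C) ^ (-(1 / p)) * (α n : ℝ) *
            lpNorm p (sgrad S ⟨1, hS1⟩ φ) ≤ lpNorm p φ :=
    fun n hn =>
      aux_master S hS1 hSsymm p C hp hC (α n) (hα n) (H n) (H' n) (hne n hn)
        (hfin n hn) (hsub n hn) (hpair n hn) (hvol n hn)
  refine ⟨P1, ?_⟩
  intro n hn
  obtain ⟨φ, hφ0, hφfin, hφsupp, hφineq⟩ := P1 n hn
  have hE_pos := aux_lpNorm_sgrad_pos S hS1 hSgen p hp φ hφ0 hφfin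
  have hsubset : Function.support φ ⊆ (S : Set G) ^ (⌈C⌉₊ * n) := by
    refine hφsupp.trans ((hdiam n hn).trans (Set.pow_subset_pow_right hS1' ?_))
    have h1 : C * (n : ℝ) ≤ ((⌈C⌉₊ * n : ℕ) : ℝ) := by
      push_cast
      exact mul_le_mul_of_nonneg_right (Nat.le_ceil C) (Nat.cast_nonneg n)
    calc ⌊C * (n : ℝ)⌋₊ ≤ ⌊((⌈C⌉₊ * n : ℕ) : ℝ)⌋₊ := Nat.floor_mono h1
      _ = ⌈C⌉₊ * n := Nat.floor_natCast _
  have hmem : lpNorm p φ / lpNorm p (sgrad S ⟨1, hS1⟩ φ) ∈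
      {r : ℝ | ∃ ψ : G → ℝ, ψ ≠ 0 ∧ (Function.support ψ).Finite ∧
        Function.support ψ ⊆ (S : Set G) ^ (⌈C⌉₊ * n) ∧
        r = lpNorm p ψ / lpNorm p (sgrad S ⟨1, hS1⟩ ψ)} :=
    ⟨φ, hφ0, hφfin, hsubset, rfl⟩
  have hle : ((1 + (S.card : ℝ)) * C) ^ (-(1 / p)) * (α n : ℝ) ≤
      lpNorm p φ / lpNorm p (sgrad S ⟨1, hS1⟩ φ) :=
    (le_div_iff₀ hE_pos).mpr hφineq
  exact le_trans hle
    (le_csSup (aux_jb_bddAbove S hS1 hSsymm hSgen p hp (⌈C⌉₊ * n)) hmem)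
end

section
/- Let F be a nontrivial finite group and let G = F ≀ ℤ be the wreath product with its standard finite symmetric generating set S. For n ≥ 1 define H_n = { (k,u) ∈ G : k ∈ [−n,n], supp u ⊆ [−2n,2n] } and H'_n = { (k,u) ∈ G : k ∈ [−2n,2n], supp u ⊆ [−2n,2n] }. Then: (i) S^n·H_n ⊆ H'_n for every n ≥ 1; (ii) |H'_n| ≤ 2·|H_n| for every n ≥ 1; (iii) there exists a constant C > 0 (depending only on F) such that H'_n ⊆ S^{C·n} for every n ≥ 1. In particular (H_n, H'_n) is a controlled sequence of Følner pairs for G. -/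
open scoped Pointwise

/-- The shift `τ_m` on finitely supported configurations `ℤ →₀ Additive F`,
`(τ_m u)(x) = u (m + x)`, as an additive automorphism. -/
noncomputable def shiftW (F : Type*) [Group F] (m : ℤ) :
    (ℤ →₀ Additive F) ≃+ (ℤ →₀ Additive F) where
  toFun u := Finsupp.equivMapDomain (Equiv.addLeft (-m)) u
  invFun u := Finsupp.equivMapDomain (Equiv.addLeft m) u
  left_inv u := by ext i; simp [Finsupp.equivMapDomain_apply]
  right_inv u := by ext i; simp [Finsupp.equivMapDomain_apply]
  map_add' u v := by ext i; simp [Finsupp.equivMapDomain_apply]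

lemma shiftW_apply (F : Type*) [Group F] (m : ℤ) (u : ℤ →₀ Additive F) (x : ℤ) :
    shiftW F m u x = u (m + x) := by
  simp [shiftW, Finsupp.equivMapDomain_apply]

lemma shiftW_shiftW (F : Type*) [Group F] (l m : ℤ) (u : ℤ →₀ Additive F) :
    shiftW F l (shiftW F m u) = shiftW F (m + l) u := by
  ext x; simp [shiftW_apply, add_assoc]

lemma shiftW_zero (F : Type*) [Group F] (u : ℤ →₀ Additive F) : shiftW F 0 u = u := by
  ext x; simp [shiftW_apply]

/-- The wreath product `F ≀ ℤ`: pairs `(k, u)` with `k ∈ ℤ` and `u : ℤ → F` finitely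
supported (written additively as `ℤ →₀ Additive F`). -/
@[ext] structure WreathZ (F : Type*) [Group F] where
  pos : ℤ
  lamp : ℤ →₀ Additive F

/-- Group law of `F ≀ ℤ`: `(k,u)(m,v) = (k + m, τ_m u + v)` where `(τ_m u)(x) = u (m + x)`. -/
noncomputable instance (F : Type*) [Group F] : Group (WreathZ F) where
  mul g h := ⟨g.pos + h.pos, shiftW F h.pos g.lamp + h.lamp⟩
  one := ⟨0, 0⟩
  inv g := ⟨-g.pos, shiftW F (-g.pos) (-g.lamp)⟩
  mul_assoc a b c := by
    ext
    · exact add_assoc _ _ _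
    · show ((shiftW F c.pos) ((shiftW F b.pos) a.lamp + b.lamp) + c.lamp) _ =
        ((shiftW F (b.pos + c.pos)) a.lamp + ((shiftW F c.pos) b.lamp + c.lamp)) _
      rw [map_add, shiftW_shiftW, add_assoc]
  one_mul a := by
    ext
    · exact zero_add _
    · show ((shiftW F a.pos) 0 + a.lamp) _ = a.lamp _
      rw [map_zero, zero_add]
  mul_one a := by
    ext
    · exact add_zero _
    · show ((shiftW F 0) a.lamp + 0) _ = a.lamp _
      rw [shiftW_zero, add_zero]
  inv_mul_cancel a := by
    show (⟨-a.pos + a.pos, shiftW F a.pos (shiftW F (-a.pos) (-a.lamp)) + a.lamp⟩ : WreathZ F)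
      = ⟨0, 0⟩
    ext
    · exact neg_add_cancel _
    · show ((shiftW F a.pos) ((shiftW F (-a.pos)) (-a.lamp)) + a.lamp) _
        = (0 : ℤ →₀ Additive F) ‹ℤ›
      rw [shiftW_shiftW, neg_add_cancel, shiftW_zero, neg_add_cancel]

/-- The standard generating set of `F ≀ ℤ`:
lamp generators `{(0,u) : supp u ⊆ {0}}` and walker generators `{(ε,1) : ε ∈ {-1,0,1}}`. -/
def wreathGen (F : Type*) [Group F] : Set (WreathZ F) :=
  {g | g.pos = 0 ∧ ∀ x : ℤ, x ≠ 0 → g.lamp x = 0} ∪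
    {g | g.lamp = 0 ∧ g.pos ∈ ({-1, 0, 1} : Set ℤ)}

/-- The Følner set `H_n = { (k,u) : k ∈ [-n,n], supp u ⊆ [-2n,2n] }`. -/
def wreathH (F : Type*) [Group F] (n : ℕ) : Set (WreathZ F) :=
  {g | g.pos ∈ Set.Icc (-(n : ℤ)) (n : ℤ) ∧
    ∀ x : ℤ, g.lamp x ≠ 0 → x ∈ Set.Icc (-(2 * n : ℤ)) (2 * n : ℤ)}

/-- The Følner set `H'_n = { (k,u) : k ∈ [-2n,2n], supp u ⊆ [-2n,2n] }`. -/
def wreathH' (F : Type*) [Group F] (n : ℕ) : Set (WreathZ F) :=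
  {g | g.pos ∈ Set.Icc (-(2 * n : ℤ)) (2 * n : ℤ) ∧
    ∀ x : ℤ, g.lamp x ≠ 0 → x ∈ Set.Icc (-(2 * n : ℤ)) (2 * n : ℤ)}


section Aux

variable (F : Type*) [Group F]

lemma wreath_mk_mul (a b : ℤ) (u v : ℤ →₀ Additive F) :
    (⟨a, u⟩ : WreathZ F) * ⟨b, v⟩ = ⟨a + b, shiftW F b u + v⟩ := rfl

lemma wreath_mul_pos (g h : WreathZ F) : (g * h).pos = g.pos + h.pos := rfl

lemma wreath_mul_lamp (g h : WreathZ F) :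
    (g * h).lamp = shiftW F h.pos g.lamp + h.lamp := rfl

lemma wreath_one_def : (1 : WreathZ F) = ⟨0, 0⟩ := rfl

lemma shiftW_single (m c : ℤ) (a : Additive F) :
    shiftW F m (Finsupp.single c a) = Finsupp.single (c - m) a := by
  ext y
  rw [shiftW_apply, Finsupp.single_apply, Finsupp.single_apply]
  split_ifs with h1 h2 <;> first | rfl | omega

lemma one_mem_wreathGen : (1 : WreathZ F) ∈ wreathGen F :=
  Set.mem_union_left _ ⟨rfl, fun _ _ => rfl⟩

lemma lampgen_mem (a : Additive F) :
    (⟨0, Finsupp.single 0 a⟩ : WreathZ F) ∈ wreathGen F := by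
  refine Set.mem_union_left _ ⟨rfl, fun x hx => ?_⟩
  exact Finsupp.single_eq_of_ne' (Ne.symm hx)

lemma walkgen_mem (e : ℤ) (he : e = -1 ∨ e = 0 ∨ e = 1) :
    (⟨e, 0⟩ : WreathZ F) ∈ wreathGen F := by
  refine Set.mem_union_right _ ⟨rfl, ?_⟩
  simpa using he

/-- Elements of `S^n` have position in `[-n,n]` and lamps supported in `[-n,n]`. -/
lemma mem_pow_bound : ∀ n : ℕ, ∀ g : WreathZ F, g ∈ wreathGen F ^ n →
    (-(n:ℤ) ≤ g.pos ∧ g.pos ≤ n) ∧ ∀ x : ℤ, g.lamp x ≠ 0 → -(n:ℤ) ≤ x ∧ x ≤ n := by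
  intro n
  induction n with
  | zero =>
    intro g hg
    rw [pow_zero, Set.mem_one] at hg
    subst hg
    refine ⟨?_, fun x hx => absurd rfl hx⟩
    rw [wreath_one_def]
    norm_num
  | succ n ih =>
    intro g hg
    rw [pow_succ] at hg
    obtain ⟨h, hh, s, hs, rfl⟩ := hg
    obtain ⟨⟨hp1, hp2⟩, hl⟩ := ih h hh
    have hspos : -(1:ℤ) ≤ s.pos ∧ s.pos ≤ 1 := by
      rcases hs with ⟨hp, -⟩ | ⟨-, hp⟩
      · rw [hp]; norm_num
      · rcases hp with h | h | h <;> rw [h] <;> norm_num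
    constructor
    · rw [wreath_mul_pos]
      push_cast
      omega
    · intro x hx
      rw [wreath_mul_lamp, Finsupp.add_apply] at hx
      have hor : shiftW F s.pos h.lamp x ≠ 0 ∨ s.lamp x ≠ 0 := by
        by_contra hc
        push_neg at hc
        rw [hc.1, hc.2, add_zero] at hx
        exact hx rfl
      rcases hor with h1 | h1
      · rw [shiftW_apply] at h1
        have := hl _ h1
        push_cast
        omega
      · rcases hs with ⟨hp, hz⟩ | ⟨hz, -⟩
        · by_cases hx0 : x = 0
          · subst hx0; push_cast; omega
          · exact absurd (hz x hx0) h1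
        · rw [hz] at h1
          exact absurd rfl h1

/-- Boxes are finite. -/
lemma box_finite [Finite F] (a b c d : ℤ) :
    {g : WreathZ F | (a ≤ g.pos ∧ g.pos ≤ b) ∧
      ∀ x : ℤ, g.lamp x ≠ 0 → c ≤ x ∧ x ≤ d}.Finite := by
  classical
  haveI : Finite (Set.Icc c d) := (Set.finite_Icc c d).to_subtype
  set Φ : WreathZ F → ℤ × (Set.Icc c d → Additive F) :=
    fun g => (g.pos, fun i => g.lamp i.1) with hΦ
  apply Set.Finite.of_finite_image (f := Φ)
  · refine (((Set.finite_Icc a b).prod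
      (Set.finite_univ (α := Set.Icc c d → Additive F)))).subset ?_
    rintro - ⟨g, ⟨⟨h1, h2⟩, -⟩, rfl⟩
    exact ⟨⟨h1, h2⟩, trivial⟩
  · rintro g ⟨-, hg⟩ g' ⟨-, hg'⟩ he
    have hpos : g.pos = g'.pos := congrArg Prod.fst he
    have hlam : ∀ i : Set.Icc c d, g.lamp i.1 = g'.lamp i.1 :=
      fun i => congrFun (congrArg Prod.snd he) i
    ext1
    · exact hpos
    · ext x
      by_cases hx : c ≤ x ∧ x ≤ d
      · exact hlam ⟨x, hx⟩
      · by_cases h1 : g.lamp x = 0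
        · by_cases h2 : g'.lamp x = 0
          · rw [h1, h2]
          · exact absurd (hg' x h2) hx
        · exact absurd (hg x h1) hx

lemma tpow_mem : ∀ j : ℕ, ∀ m : ℤ, -(j:ℤ) ≤ m → m ≤ j →
    (⟨m, 0⟩ : WreathZ F) ∈ wreathGen F ^ j := by
  intro j
  induction j with
  | zero =>
    intro m h1 h2
    have hm : m = 0 := by omega
    subst hm
    rw [pow_zero, Set.mem_one, wreath_one_def]
  | succ j ih =>
    intro m h1 h2
    by_cases hm : -(j:ℤ) ≤ m ∧ m ≤ j
    · exact Set.pow_subset_pow subset_rfl (one_mem_wreathGen F) (Nat.le_succ j)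
        (ih m hm.1 hm.2)
    · have he : m = (j:ℤ)+1 ∨ m = -((j:ℤ)+1) := by push_cast at h1 h2 ⊢; omega
      have key : ∀ e : ℤ, (⟨e, 0⟩ : WreathZ F) * ⟨m - e, 0⟩ = ⟨m, 0⟩ := by
        intro e
        rw [wreath_mk_mul, map_zero, add_zero]
        congr 1
        ring
      rw [pow_succ']
      rcases he with rfl | rfl
      · rw [← key 1]
        exact Set.mul_mem_mul (walkgen_mem F 1 (by norm_num))
          (ih _ (by omega) (by omega))
      · rw [← key (-1)]
        exact Set.mul_mem_mul (walkgen_mem F (-1) (by norm_num))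
          (ih _ (by omega) (by omega))

/-- The walk: a configuration supported on `[0,m]`, carried while walking to `-m`,
costs at most `2m+1` generators. -/
lemma walk_mem : ∀ m : ℕ, ∀ u : ℤ →₀ Additive F,
    (∀ x : ℤ, u x ≠ 0 → 0 ≤ x ∧ x ≤ (m:ℤ)) →
    (⟨-(m:ℤ), u⟩ : WreathZ F) ∈ wreathGen F ^ (2*m+1) := by
  intro m
  induction m with
  | zero =>
    intro u hu
    have h1 : (2*0+1 : ℕ) = 1 := by norm_num
    rw [h1, pow_one]
    refine Set.mem_union_left _ ⟨by norm_num, fun x hx => ?_⟩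
    by_contra hc
    have := hu x hc
    omega
  | succ m ih =>
    intro u hu
    classical
    set a : Additive F := u ((m:ℤ)+1) with ha
    set w : ℤ →₀ Additive F := u.erase ((m:ℤ)+1) with hw
    have hwsupp : ∀ x : ℤ, w x ≠ 0 → 0 ≤ x ∧ x ≤ (m:ℤ) := by
      intro x hx
      by_cases hx1 : x = (m:ℤ)+1
      · rw [hw, hx1, Finsupp.erase_same] at hx
        exact absurd rfl hx
      · rw [hw, Finsupp.erase_ne hx1] at hx
        have := hu x hx
        push_cast at this
        omega
    have key : (⟨0, Finsupp.single 0 a⟩ : WreathZ F) * ⟨-1, 0⟩ * ⟨-(m:ℤ), w⟩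
        = ⟨-((m:ℤ)+1), u⟩ := by
      simp only [wreath_mk_mul, add_zero, shiftW_shiftW, shiftW_single]
      congr 1
      · ring
      · have h1 : (0 : ℤ) - -1 - -(m:ℤ) = (m:ℤ)+1 := by ring
        rw [h1, ha, hw, Finsupp.single_add_erase]
    have hexp : 2*(m+1)+1 = 1+1+(2*m+1) := by ring
    have hcast : -(((m+1 : ℕ)) : ℤ) = -((m:ℤ)+1) := by push_cast; ring
    rw [hexp, hcast, ← key, pow_add, pow_add, pow_one]
    exact Set.mul_mem_mul
      (Set.mul_mem_mul (lampgen_mem F a) (walkgen_mem F (-1) (by norm_num)))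
      (ih w hwsupp)

end Aux

/-- **Controlled Følner pairs in `F ≀ ℤ`.**
Let `F` be a nontrivial finite group and `G = F ≀ ℤ` with its standard generating set `S`.
With `H_n, H'_n` as above: (i) `S^n · H_n ⊆ H'_n`; (ii) `|H'_n| ≤ 2·|H_n|`;
(iii) there is `C > 0` with `H'_n ⊆ S^{C·n}` for all `n ≥ 1`.  In particular
`(H_n, H'_n)` is a controlled sequence of Følner pairs for `G`. -/
theorem stmt_12 (F : Type*) [Group F] [Finite F] [Nontrivial F] :
    (∀ n : ℕ, 1 ≤ n → wreathGen F ^ n * wreathH F n ⊆ wreathH' F n) ∧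
    (∀ n : ℕ, 1 ≤ n → (wreathH' F n).ncard ≤ 2 * (wreathH F n).ncard) ∧
    (∃ C : ℕ, 0 < C ∧ ∀ n : ℕ, 1 ≤ n → wreathH' F n ⊆ wreathGen F ^ (C * n)) := by
  classical
  have hSn : ∀ n : ℕ, 1 ≤ n → wreathGen F ^ n * wreathH F n ⊆ wreathH' F n := by
    intro n hn g hg
    obtain ⟨s, hs, h, hh, rfl⟩ := hg
    obtain ⟨⟨hp1, hp2⟩, hl⟩ := mem_pow_bound F n s hs
    obtain ⟨hhp, hhl⟩ := hh
    rw [Set.mem_Icc] at hhp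
    constructor
    · rw [Set.mem_Icc, wreath_mul_pos]
      push_cast
      constructor <;> omega
    · intro x hx
      rw [wreath_mul_lamp, Finsupp.add_apply] at hx
      have hor : shiftW F h.pos s.lamp x ≠ 0 ∨ h.lamp x ≠ 0 := by
        by_contra hc
        push_neg at hc
        rw [hc.1, hc.2, add_zero] at hx
        exact hx rfl
      rw [Set.mem_Icc]
      rcases hor with h1 | h1
      · rw [shiftW_apply] at h1
        have := hl _ h1
        push_cast
        constructor <;> omega
      · have := hhl x h1
        rw [Set.mem_Icc] at this
        exact this
  refine ⟨hSn, ?_, ?_⟩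
  · -- (ii)  |H'_n| ≤ 2 |H_n|
    intro n hn
    have hHfin : (wreathH F n).Finite := by
      refine (box_finite F (-(n:ℤ)) (n:ℤ) (-(2*n:ℤ)) (2*n:ℤ)).subset ?_
      rintro g ⟨hp, hl⟩
      rw [Set.mem_Icc] at hp
      exact ⟨hp, fun x hx => Set.mem_Icc.mp (hl x hx)⟩
    have hH'fin : (wreathH' F n).Finite := by
      refine (box_finite F (-(2*n:ℤ)) (2*n:ℤ) (-(2*n:ℤ)) (2*n:ℤ)).subset ?_
      rintro g ⟨hp, hl⟩
      rw [Set.mem_Icc] at hp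
      exact ⟨hp, fun x hx => Set.mem_Icc.mp (hl x hx)⟩
    set B : Set (WreathZ F) :=
      {g | g ∈ wreathH' F n ∧ (g.pos < -(n:ℤ) ∨ (n:ℤ) < g.pos)} with hB
    have hBfin : B.Finite := hH'fin.subset (fun g hg => hg.1)
    have hsub : wreathH' F n ⊆ wreathH F n ∪ B := by
      intro g hg
      by_cases hp : -(n:ℤ) ≤ g.pos ∧ g.pos ≤ n
      · left
        exact ⟨Set.mem_Icc.mpr hp, hg.2⟩
      · right
        refine ⟨hg, ?_⟩
        omega
    have hBle : B.ncard ≤ (wreathH F n).ncard := by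
      set ψ : WreathZ F → WreathZ F :=
        fun g => ⟨if 0 < g.pos then g.pos - (2*n+1) else g.pos + (2*n+1), g.lamp⟩
        with hψ
      refine Set.ncard_le_ncard_of_injOn ψ ?_ ?_ hHfin
      · rintro g ⟨⟨hp, hl⟩, hout⟩
        rw [Set.mem_Icc] at hp
        constructor
        · rw [Set.mem_Icc, hψ]
          simp only
          split_ifs with h <;> push_cast <;> constructor <;> omega
        · intro x hx
          exact hl x hx
      · rintro g ⟨⟨hp, -⟩, hout⟩ g' ⟨⟨hp', -⟩, hout'⟩ he
        rw [Set.mem_Icc] at hp hp'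
        simp only [hψ, WreathZ.mk.injEq] at he
        obtain ⟨hq, hl⟩ := he
        ext1
        · split_ifs at hq <;> omega
        · exact hl
    calc (wreathH' F n).ncard ≤ (wreathH F n ∪ B).ncard :=
          Set.ncard_le_ncard hsub (hHfin.union hBfin)
      _ ≤ (wreathH F n).ncard + B.ncard := Set.ncard_union_le _ _
      _ ≤ (wreathH F n).ncard + (wreathH F n).ncard := by omega
      _ = 2 * (wreathH F n).ncard := by ring
  · -- (iii)  H'_n ⊆ S^(15n)
    refine ⟨15, by norm_num, ?_⟩
    intro n hn g hg
    obtain ⟨hp, hl⟩ := hg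
    rw [Set.mem_Icc] at hp
    obtain ⟨k, u⟩ := g
    simp only at hp hl
    set w : ℤ →₀ Additive F := shiftW F (-(2*n:ℤ)) u with hwdef
    have hwsupp : ∀ x : ℤ, w x ≠ 0 → 0 ≤ x ∧ x ≤ ((4*n : ℕ):ℤ) := by
      intro x hx
      rw [hwdef, shiftW_apply] at hx
      have := hl _ hx
      rw [Set.mem_Icc] at this
      push_cast
      constructor <;> omega
    have key : (⟨k + 2*n, 0⟩ : WreathZ F) * (⟨-((4*n:ℕ):ℤ), w⟩ * ⟨2*n, 0⟩)
        = ⟨k, u⟩ := by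
      simp only [wreath_mk_mul, map_zero, zero_add, add_zero]
      congr 1
      · push_cast
        ring
      · rw [hwdef, shiftW_shiftW, neg_add_cancel, shiftW_zero]
    have hmem : (⟨k + 2*n, 0⟩ : WreathZ F) * (⟨-((4*n:ℕ):ℤ), w⟩ * ⟨2*n, 0⟩)
        ∈ wreathGen F ^ (4*n) * (wreathGen F ^ (2*(4*n)+1) * wreathGen F ^ (2*n)) := by
      refine Set.mul_mem_mul ?_ (Set.mul_mem_mul ?_ ?_)
      · exact tpow_mem F (4*n) (k + 2*n) (by push_cast; omega) (by push_cast; omega)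
      · exact walk_mem F (4*n) w hwsupp
      · exact tpow_mem F (2*n) (2*n) (by push_cast; omega) (by push_cast; omega)
    rw [key] at hmem
    have heq : wreathGen F ^ (4*n + ((2*(4*n)+1) + 2*n))
        = wreathGen F ^ (4*n) * (wreathGen F ^ (2*(4*n)+1) * wreathGen F ^ (2*n)) := by
      rw [pow_add (wreathGen F) (4*n), pow_add (wreathGen F) (2*(4*n)+1)]
    rw [← heq] at hmem
    exact Set.pow_subset_pow subset_rfl (one_mem_wreathGen F) (by omega) hmem
end

section
/- Let G be a locally compact, second-countable topological group (with its Borel σ-algebra), let H be a closed normal subgroup of G, and let π : G → G/H be the quotient homomorphism, where G/H carries the quotient topology. Let λ be a left Haar measure on H and ν a left Haar measure on G/H, and let i : G/H → G be a Borel-measurable map with π(i(x)) = x for every x ∈ G/H. Define Φ : (G/H) × H → G by Φ(x,h) = i(x)·h. Then the pushforward measure Φ_*(ν ⊗ λ) is left-invariant on G: for every g ∈ G, the pushforward of Φ_*(ν ⊗ λ) under left translation by g equals Φ_*(ν ⊗ λ). -/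
open MeasureTheory

/-- **Haar measure of a group extension via a measurable section.**
Let `G` be a locally compact second-countable topological group (with its Borel σ-algebra),
`H ⊴ G` a closed normal subgroup, `π : G → G/H` the quotient map, `λ` a left Haar measure on
`H` and `ν` a left Haar measure on `G/H` (each a nonzero regular left-invariant Borel
measure), and let `i : G/H → G` be a Borel section of `π`.  Identifying `G` with
`(G/H) × H` via `Φ(x,h) = i(x)·h`, the pushforward `Φ_*(ν ⊗ λ)` is left-invariant on `G`:
for every `g ∈ G` its pushforward under left translation by `g` equals itself. -/
theorem stmt_14 {G : Type*} [Group G] [TopologicalSpace G] [IsTopologicalGroup G]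
    [LocallyCompactSpace G] [SecondCountableTopology G]
    [MeasurableSpace G] [BorelSpace G]
    (H : Subgroup G) [H.Normal] (hHclosed : IsClosed (H : Set G))
    [MeasurableSpace (G ⧸ H)] [BorelSpace (G ⧸ H)]
    (lam : Measure H) (hlam0 : lam ≠ 0) (hlamreg : lam.Regular)
    [lam.IsMulLeftInvariant]
    (nu : Measure (G ⧸ H)) (hnu0 : nu ≠ 0) (hnureg : nu.Regular)
    [nu.IsMulLeftInvariant]
    (i : G ⧸ H → G) (hi : Measurable i)
    (hsec : ∀ x : G ⧸ H, QuotientGroup.mk (i x) = x) :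
    ∀ g : G,
      Measure.map (fun x : G => g * x)
        (Measure.map (fun q : (G ⧸ H) × H => i q.1 * (q.2 : G)) (nu.prod lam)) =
      Measure.map (fun q : (G ⧸ H) × H => i q.1 * (q.2 : G)) (nu.prod lam) := by

  intro g
  have hmem : ∀ x : G ⧸ H, (i (QuotientGroup.mk g * x))⁻¹ * g * i x ∈ H := by
    intro x
    rw [← QuotientGroup.eq_one_iff]
    simp [QuotientGroup.mk_mul, QuotientGroup.mk_inv, hsec]
  set c : G ⧸ H → H := fun x => ⟨(i (QuotientGroup.mk g * x))⁻¹ * g * i x, hmem x⟩ with hc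
  have hΦm : Measurable (fun q : (G ⧸ H) × H => i q.1 * (q.2 : G)) :=
    (hi.comp measurable_fst).mul (measurable_subtype_coe.comp measurable_snd)
  have hmulq : Measurable (fun x : G ⧸ H => QuotientGroup.mk g * x) :=
    (continuous_mul_left (QuotientGroup.mk g : G ⧸ H)).measurable
  have hf : MeasurePreserving (fun x : G ⧸ H => QuotientGroup.mk g * x) nu nu :=
    ⟨hmulq, MeasureTheory.map_mul_left_eq_self nu _⟩
  haveI : SecondCountableTopology H := TopologicalSpace.Subtype.secondCountableTopology (H : Set G)
  haveI : LocallyCompactSpace H := hHclosed.locallyCompactSpace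
  haveI : SigmaCompactSpace H := sigmaCompactSpace_of_locallyCompact_secondCountable
  haveI := hlamreg
  haveI : SigmaFinite lam := by infer_instance
  have hcm : Measurable c := by
    apply Measurable.subtype_mk
    exact (((hi.comp hmulq).inv.mul measurable_const)).mul hi
  have hgm : Measurable (Function.uncurry fun x (h : H) => c x * h) := by
    apply Measurable.subtype_mk
    exact ((measurable_subtype_coe.comp (hcm.comp measurable_fst)).mul
      (measurable_subtype_coe.comp measurable_snd))
  have hskew : MeasurePreserving
      (fun p : (G ⧸ H) × H => (QuotientGroup.mk g * p.1, c p.1 * p.2))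
      (nu.prod lam) (nu.prod lam) :=
    hf.skew_product hgm (Filter.Eventually.of_forall fun x =>
      MeasureTheory.map_mul_left_eq_self lam (c x))
  have hcomp : (fun x : G => g * x) ∘ (fun q : (G ⧸ H) × H => i q.1 * (q.2 : G)) =
      (fun q : (G ⧸ H) × H => i q.1 * (q.2 : G)) ∘
      (fun p : (G ⧸ H) × H => (QuotientGroup.mk g * p.1, c p.1 * p.2)) := by
    funext p
    simp only [Function.comp_apply, hc, Subgroup.coe_mul]
    group
  rw [Measure.map_map (measurable_const_mul g) hΦm, hcomp,
    ← Measure.map_map hΦm hskew.measurable, hskew.map_eq]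
end

section
/- Let G be a group, let 1 ≤ p < ∞, and let b : G → ℓ^p(G) be a 1-cocycle for the left regular representation λ of G on ℓ^p(G). Then there exists a function φ : G → ℝ such that for every g ∈ G and every x ∈ G, b(g)(x) = φ(x) − φ(g^{-1}x); in particular, for every g ∈ G the function φ − λ(g)φ belongs to ℓ^p(G) and equals b(g). -/
/-- **Cocycles for the regular representation are of the form `φ - λ(g)φ`.**
Let `G` be a group, `1 ≤ p < ∞`, and let `b : G → ℓ^p(G)` be a 1-cocycle for the left
regular representation `λ` (i.e. `b(gh) = λ(g)b(h) + b(g)`, expressed pointwise as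
`b(gh)(x) = b(h)(g⁻¹x) + b(g)(x)`).  Then there is a function `φ : G → ℝ` such that
`b(g)(x) = φ(x) - φ(g⁻¹x)` for all `g, x`; in particular for every `g` the function
`φ - λ(g)φ` is `p`-summable and equals `b g`. -/
theorem stmt_16 {G : Type*} [Group G] (p : ℝ) (hp : 1 ≤ p)
    (b : G → lp (fun _ : G => ℝ) (ENNReal.ofReal p))
    (hcoc : ∀ g h : G, ∀ x : G,
      (b (g * h) : ∀ _ : G, ℝ) x = (b h : ∀ _ : G, ℝ) (g⁻¹ * x) + (b g : ∀ _ : G, ℝ) x) :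
    ∃ φ : G → ℝ,
      (∀ g x : G, (b g : ∀ _ : G, ℝ) x = φ x - φ (g⁻¹ * x)) ∧
      ∀ g : G, Memℓp (fun x : G => φ x - φ (g⁻¹ * x)) (ENNReal.ofReal p) := by
  refine ⟨fun x => (b x : ∀ _ : G, ℝ) x, fun g x => ?_, fun g => ?_⟩
  · have h := hcoc g (g⁻¹ * x) x
    rw [mul_inv_cancel_left] at h
    linarith
  · have heq : (fun x : G => (b x : ∀ _ : G, ℝ) x - (b (g⁻¹ * x) : ∀ _ : G, ℝ) (g⁻¹ * x))
        = ⇑(b g) := by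
      funext x
      have h := hcoc g (g⁻¹ * x) x
      rw [mul_inv_cancel_left] at h
      linarith
    rw [heq]
    exact lp.memℓp (b g)
end
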